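/- arXiv:1212.4437 — 8 statements merged into one kernel-verified Lean document; each statement's English description precedes it below -/
import Mathlib

section
/- Let f : [0,y] → ℝ be continuous with f(0) = 0 < f(y), and suppose f is α-concave, i.e. the function x ↦ f(x) + αx² is concave on [0,y], with α ≥ 0. Let x ∈ (0,y) satisfy 0 < f(x) < f(y). Then ((f(y) - f(x))/f(x)) · (x/(y-x)) ≤ f(y)/(f(y) + αy²). -/
open Set

/-!
Concavity of `g x = f x + α x²` together with `g 0 = 0` says that the chord slope `g x / x` is
at least `g y / y`, i.e. `x (f y + α y²) ≤ y (f x + α x²)`. Since `α ≥ 0`, this already gives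
`x f y ≤ y f x`, and clearing denominators turns the claim into a combination of these two
inequalities.
-/

theorem ConcaveOn.smul_le_map_smul {𝕜 E β : Type*} [Field 𝕜] [LinearOrder 𝕜]
    [IsStrictOrderedRing 𝕜] [AddCommGroup E] [Module 𝕜 E] [AddCommGroup β] [PartialOrder β]
    [Module 𝕜 β] {s : Set E} {g : E → β} (hg : ConcaveOn 𝕜 s g) (h0 : 0 ∈ s) (hg0 : g 0 = 0)
    {y : E} (hy : y ∈ s) {t : 𝕜} (ht0 : 0 ≤ t) (ht1 : t ≤ 1) : t • g y ≤ g (t • y) := by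
  simpa [hg0] using hg.2 h0 hy (sub_nonneg.2 ht1) ht0 (sub_add_cancel 1 t)

theorem fratio_inc_general (y α : ℝ) (f : ℝ → ℝ) (hy : 0 < y)
    (hα : 0 ≤ α)
    (hconc : ConcaveOn ℝ (Icc 0 y) (fun x => f x + α * x ^ 2))
    (hf0 : f 0 = 0) (hfy : 0 < f y)
    (x : ℝ) (hx : x ∈ Ioo 0 y) (hfx : 0 < f x) :
    (f y - f x) / f x * (x / (y - x)) ≤ f y / (f y + α * y ^ 2) := by
  obtain ⟨hx0, hxy⟩ := hx
  have hchord : x / y * (f y + α * y ^ 2) ≤ f x + α * x ^ 2 := by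
    have := hconc.smul_le_map_smul ⟨le_rfl, hy.le⟩ (by simp [hf0]) ⟨hy.le, le_rfl⟩
      (div_nonneg hx0.le hy.le) ((div_le_one hy).2 hxy.le)
    simpa [div_mul_cancel₀ x hy.ne'] using this
  have hchord' : x * (f y + α * y ^ 2) ≤ y * (f x + α * x ^ 2) := by
    rwa [div_mul_eq_mul_div, div_le_iff₀ hy, mul_comm _ y] at hchord
  have hslope : x * f y ≤ y * f x := by
    nlinarith [mul_nonneg (mul_nonneg (mul_nonneg hα hx0.le) hy.le) (sub_pos.2 hxy).le]
  rw [div_mul_div_comm, div_le_div_iff₀ (mul_pos hfx (sub_pos.2 hxy)) (by positivity)]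
  nlinarith [mul_le_mul_of_nonneg_left hchord' hfy.le,
    mul_le_mul_of_nonneg_left hslope (by positivity : (0:ℝ) ≤ α * x * y)]

/-- Lemma 2 (fratio-inc): for an α-concave map `f` on `[0,y]` with `f 0 = 0 < f y`
and `x ∈ (0,y)` with `0 < f x < f y`, we have
`κ(f x, f y)/κ(x,y) = ((f y - f x)/f x)·(x/(y-x)) ≤ f y / (f y + α y²)`. -/
theorem fratio_inc (y α : ℝ) (f : ℝ → ℝ) (hy : 0 < y)
    (hcont : ContinuousOn f (Icc 0 y))
    (hα : 0 ≤ α)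
    (hconc : ConcaveOn ℝ (Icc 0 y) (fun x => f x + α * x ^ 2))
    (hf0 : f 0 = 0) (hfy : 0 < f y)
    (x : ℝ) (hx : x ∈ Ioo 0 y) (hfx : 0 < f x) (hfxy : f x < f y) :
    (f y - f x) / f x * (x / (y - x)) ≤ f y / (f y + α * y ^ 2) :=
  fratio_inc_general y α f hy hα hconc hf0 hfy x hx hfx
end

section
/- Let f : [0,a] → [0,a] be a strictly concave, nonnegative map with f(0) = 0 and a > 0. Define the isoclinic point b := sup { x ∈ [0,a] : |f'₋(x)| < f(x)/x }, where f'₋ denotes the left one-sided derivative (which exists by concavity). Then b ≥ a/2. -/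
open Set

/-!
Suppose `b < a / 2`. Strict concavity and `f 0 = 0` give `f'₋(x) < f(x)/x`, so a point
`x ∈ (b, a/2)`, which is not isoclinic, must have `f'₋(x) ≤ -f(x)/x`. The tangent line at `x`
lies above the graph also to the right of `x`, so `f(2x) ≤ f(x) + x f'₋(x) ≤ 0`. Hence `f`
vanishes on `(2b, a)`, which together with `f 0 = 0` contradicts strict concavity.
-/

lemma ConcaveOn.slope_le_of_hasDerivWithinAt_Iio {S : Set ℝ} {f : ℝ → ℝ} {w x y f' : ℝ}
    (hfc : ConcaveOn ℝ S f) (hw : w ∈ S) (hy : y ∈ S) (hwx : w < x) (hxy : x < y)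
    (hf' : HasDerivWithinAt f f' (Iio x) x) : slope f x y ≤ f' := by
  refine ge_of_tendsto ((hasDerivWithinAt_iff_tendsto_slope' self_notMem_Iio).mp hf') ?_
  filter_upwards [Ioo_mem_nhdsLT hwx] with t ht
  have ht' : t ∈ S := hfc.1.ordConnected.out hw hy ⟨ht.1.le, (ht.2.trans hxy).le⟩
  simpa only [slope_comm f x t, slope_def_field] using hfc.slope_anti_adjacent ht' hy ht.2 hxy

lemma StrictConcaveOn.map_two_mul_nonpos {S : Set ℝ} {f : ℝ → ℝ} {x f' : ℝ}
    (hfc : StrictConcaveOn ℝ S f) (h0 : 0 ∈ S) (h2x : 2 * x ∈ S) (hx : 0 < x) (hf0 : f 0 = 0)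
    (hf' : HasDerivWithinAt f f' (Iio x) x) (hle : f x / x ≤ |f'|) : f (2 * x) ≤ 0 := by
  have hxS : x ∈ S := hfc.1.ordConnected.out h0 h2x ⟨hx.le, by linarith⟩
  have hlt : f' < f x / x := by
    simpa [slope_def_field, hf0] using hfc.lt_slope_of_hasDerivWithinAt_Iio h0 hxS hx hf'
  have hneg : f x ≤ -f' * x := by
    rw [← div_le_iff₀ hx]
    linarith [(le_abs'.mp hle).resolve_right hlt.not_ge]
  have hslope : (f (2 * x) - f x) / x ≤ f' := by
    have := hfc.concaveOn.slope_le_of_hasDerivWithinAt_Iio h0 h2x hx (by linarith) hf'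
    rwa [slope_def_field, show 2 * x - x = x by ring] at this
  rw [div_le_iff₀ hx] at hslope
  linarith

theorem isoclinic_ge_half_general (a : ℝ) (ha : 0 < a) (f f' : ℝ → ℝ)
    (hnonneg : ∀ x ∈ Icc 0 a, 0 ≤ f x)
    (hconc : StrictConcaveOn ℝ (Icc 0 a) f)
    (hf0 : f 0 = 0)
    (hderiv : ∀ x ∈ Ioc (0:ℝ) a, HasDerivWithinAt f (f' x) (Iio x) x) :
    a / 2 ≤ sSup {x | x ∈ Ioc (0:ℝ) a ∧ |f' x| < f x / x} := by
  set S := {x | x ∈ Ioc (0:ℝ) a ∧ |f' x| < f x / x}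
  by_contra! hb
  have hb0 : 0 ≤ sSup S := Real.sSup_nonneg fun x hx => hx.1.1.le
  have h0 : (0 : ℝ) ∈ Icc 0 a := ⟨le_rfl, ha.le⟩
  have hvanish : ∀ x ∈ Ioo (sSup S) (a / 2), f (2 * x) = 0 := by
    intro x ⟨hbx, hxa⟩
    have hx0 : 0 < x := hb0.trans_lt hbx
    have hx : x ∈ Ioc 0 a := ⟨hx0, by linarith⟩
    have h2x : 2 * x ∈ Icc 0 a := ⟨by linarith, by linarith⟩
    have hxS : x ∉ S := notMem_of_csSup_lt hbx ⟨a, fun y hy => hy.1.2⟩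
    refine le_antisymm ?_ (hnonneg _ h2x)
    exact hconc.map_two_mul_nonpos h0 h2x hx0 hf0 (hderiv x hx) (not_lt.mp fun h => hxS ⟨hx, h⟩)
  obtain ⟨v, hbv, hva⟩ := exists_between hb
  obtain ⟨u, hbu, huv⟩ := exists_between hbv
  have h2v : 2 * v ∈ Icc 0 a := ⟨by linarith, by linarith⟩
  have h2u : 2 * u ∈ openSegment ℝ 0 (2 * v) := by
    rw [openSegment_eq_Ioo (by linarith)]
    exact ⟨by linarith, by linarith⟩
  have hpos := hconc.lt_on_openSegment h0 h2v (by linarith) h2u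
  rw [hf0, hvanish v ⟨hbv, hva⟩, hvanish u ⟨hbu, huv.trans hva⟩, min_self] at hpos
  exact hpos.false

/-- Lemma (isoclinic): for a strictly concave nonnegative self-map `f` of `[0,a]`
with `f 0 = 0`, the isoclinic point `b = sup {x : |f'₋(x)| < f(x)/x}` satisfies
`b ≥ a/2`.  Here `f'` denotes the left one-sided derivative of `f`. -/
theorem isoclinic_ge_half (a : ℝ) (ha : 0 < a) (f f' : ℝ → ℝ)
    (hmap : MapsTo f (Icc 0 a) (Icc 0 a))
    (hnonneg : ∀ x ∈ Icc 0 a, 0 ≤ f x)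
    (hconc : StrictConcaveOn ℝ (Icc 0 a) f)
    (hf0 : f 0 = 0)
    (hderiv : ∀ x ∈ Ioc (0:ℝ) a, HasDerivWithinAt f (f' x) (Iio x) x) :
    a / 2 ≤ sSup {x | x ∈ Ioc (0:ℝ) a ∧ |f' x| < f x / x} :=
  isoclinic_ge_half_general a ha f f' hnonneg hconc hf0 hderiv
end

section
/- Let f : [0,a] → ℝ be continuous with f(0) = 0, and suppose x ↦ f(x) + αx² is concave for some α > 0. Let b be the isoclinic point of f, and let x, y ∈ (0,b) satisfy x < y and 0 < f(y) < f(x). Then ((f(x) - f(y))/f(y)) · (x/(y-x)) < 1 - αb(b-x)/f(b). -/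
open Set Filter Topology

set_option maxHeartbeats 1000000 in
lemma fratio_endgame {α b x y v B d : ℝ} (hα : 0 < α) (hx0 : 0 < x) (hxy : x < y)
    (hyb : y < b) (hd : 0 < d) (hB : 0 < B)
    (hd1 : d*(b-y) ≤ (v-B)*(y-x) - α*(b-x)*(y-x)*(b-y))
    (hd2 : d*b ≤ (y-x)*(B - α*b*(b-y) - α*b*(b-x)))
    (hK1 : α*(b-x)*(b-y) < v - B)
    (hK2 : α*b*((b-y)+(b-x)) < B) :
    d*x*B < v*(y-x)*(B - α*b*(b-x)) := by
  have hp : 0 < b - y := sub_pos.mpr hyb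
  have hm : 0 < y - x := sub_pos.mpr hxy
  have hq : 0 < b - x := sub_pos.mpr (hxy.trans hyb)
  have hb0 : 0 < b := lt_trans hx0 (hxy.trans hyb)
  have hA : d*(b-y)*(x*B) ≤ ((v-B)*(y-x) - α*(b-x)*(y-x)*(b-y))*(x*B) :=
    mul_le_mul_of_nonneg_right hd1 (mul_nonneg hx0.le hB.le)
  by_cases hcase : b*(v-B) ≤ (b-y)*B - α*b*(b-y)^2
  · by_cases hcw : 0 ≤ (b-y)*B + (b-x)*B - b*B - α*b*(b-x)*(b-y)
    · have hs1 : 0 < v*(b-y)*(B - α*b*(b-x)) - x*B*(v-B) + α*(b-x)*(b-y)*(x*B) := by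
        nlinarith [mul_le_mul_of_nonneg_right hK1.le hcw,
          mul_nonneg (le_of_lt (mul_pos (mul_pos hα hq) hp)) hcw,
          mul_lt_mul_of_pos_right hK2 (mul_pos hp hB),
          mul_pos (mul_pos (mul_pos hα hb0) hp) (mul_pos hp hB),
          mul_pos (mul_pos (mul_pos hα hq) hp) (mul_pos hx0 hB)]
      have h2 : d*x*B*(b-y) < v*(y-x)*(B - α*b*(b-x))*(b-y) := by
        nlinarith [hA, mul_lt_mul_of_pos_left hs1 hm]
      exact lt_of_mul_lt_mul_right h2 hp.le
    · push_neg at hcw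
      have hs1 : 0 < (v*(b-y)*(B - α*b*(b-x)) - x*B*(v-B) + α*(b-x)*(b-y)*(x*B))*b := by
        nlinarith [mul_le_mul_of_nonpos_right hcase hcw.le,
          mul_lt_mul_of_pos_right hK2 (mul_pos (mul_pos hp hB) (by linarith : (0:ℝ) < (b-y)+(b-x))),
          mul_pos (mul_pos (mul_pos hα (mul_pos hb0 hb0)) (mul_pos hp hp)) hB,
          mul_pos (mul_pos (mul_pos (mul_pos hα hα) (mul_pos hb0 hb0)) hq) (mul_pos hp (mul_pos hp hp))]
      have h2 : d*x*B*((b-y)*b) < v*(y-x)*(B - α*b*(b-x))*((b-y)*b) := by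
        nlinarith [mul_le_mul_of_nonneg_right hA hb0.le, mul_lt_mul_of_pos_left hs1 hm]
      exact lt_of_mul_lt_mul_right h2 (mul_pos hp hb0).le
  · push_neg at hcase
    have hKB : 0 < B - α*b*(b-x) := by nlinarith [mul_pos (mul_pos hα hb0) hp]
    have hs2 : 0 < v*b*(B - α*b*(b-x)) - x*B*(B - α*b*(b-y) - α*b*(b-x)) := by
      nlinarith [mul_lt_mul_of_pos_right hcase hKB,
        mul_lt_mul_of_pos_right hK2 (mul_pos hB (by linarith : (0:ℝ) < (b-y)+(b-x))),
        mul_pos (mul_pos hα (mul_pos hb0 hb0)) (mul_pos hp hB),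
        mul_pos (mul_pos (mul_pos (mul_pos hα hα) (mul_pos hb0 hb0)) hq) (mul_pos hp hp),
        mul_pos hB hp]
    have hA2 : d*b*(x*B) ≤ ((y-x)*(B - α*b*(b-y) - α*b*(b-x)))*(x*B) :=
      mul_le_mul_of_nonneg_right hd2 (mul_nonneg hx0.le hB.le)
    have h2 : d*x*B*b < v*(y-x)*(B - α*b*(b-x))*b := by
      nlinarith [hA2, mul_lt_mul_of_pos_left hs2 hm]
    exact lt_of_mul_lt_mul_right h2 hb0.le

set_option maxHeartbeats 2000000 in
/-- Lemma (fratio-dec): for an α-concave map `f` on `[0,a]` with `f 0 = 0`, `α > 0`,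
isoclinic point `b`, and `x < y` in `(0,b)` with `0 < f y < f x`, we have
`κ(f x, f y)/κ(x,y) = ((f x - f y)/f y)·(x/(y-x)) < 1 - α b (b - x)/f b`. -/
theorem fratio_dec (a α : ℝ) (ha : 0 < a) (hα : 0 < α) (f f' : ℝ → ℝ)
    (hcont : ContinuousOn f (Icc 0 a)) (hf0 : f 0 = 0)
    (hconc : ConcaveOn ℝ (Icc 0 a) (fun x => f x + α * x ^ 2))
    (hderiv : ∀ x ∈ Ioc (0:ℝ) a, HasDerivWithinAt f (f' x) (Iio x) x)
    (b : ℝ) (hb : b = sSup {x | x ∈ Ioc (0:ℝ) a ∧ |f' x| < f x / x})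
    (x y : ℝ) (hx : x ∈ Ioo 0 b) (hy : y ∈ Ioo 0 b) (hxy : x < y)
    (hfy : 0 < f y) (hfxy : f y < f x) :
    (f x - f y) / f y * (x / (y - x)) < 1 - α * b * (b - x) / f b := by
  obtain ⟨hx0, hxb⟩ := hx
  obtain ⟨hy0, hyb⟩ := hy
  have hb0 : 0 < b := lt_trans hx0 hxb
  have hSne : {t | t ∈ Ioc (0:ℝ) a ∧ |f' t| < f t / t}.Nonempty := by
    by_contra h
    rw [Set.not_nonempty_iff_eq_empty] at h
    rw [h, Real.sSup_empty] at hb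
    exact hb0.ne' hb
  have hba : b ≤ a := by rw [hb]; exact csSup_le hSne fun t ht => ht.1.2
  -- secant monotonicity of g = f + α t²
  have hsec : ∀ c ∈ Icc (0:ℝ) a, ∀ s ∈ Icc (0:ℝ) a, ∀ t ∈ Icc (0:ℝ) a,
      s ≠ c → t ≠ c → s ≤ t →
      ((f t + α*t^2) - (f c + α*c^2))/(t - c) ≤ ((f s + α*s^2) - (f c + α*c^2))/(s - c) := by
    intro c hc s hs t ht hsc htc hst
    have h := hconc.neg.secant_mono hc hs ht hsc htc hst
    simp only [Pi.neg_apply] at h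
    have h1 : (-(f s + α*s^2) - -(f c + α*c^2))/(s - c)
        ≤ (-(f t + α*t^2) - -(f c + α*c^2))/(t - c) := h
    rw [show -(f s + α*s^2) - -(f c + α*c^2) = -((f s + α*s^2) - (f c + α*c^2)) by ring,
        show -(f t + α*t^2) - -(f c + α*c^2) = -((f t + α*t^2) - (f c + α*c^2)) by ring,
        neg_div, neg_div, neg_le_neg_iff] at h1
    exact h1
  -- derivative of g
  have hgd : ∀ t ∈ Ioc (0:ℝ) a,
      HasDerivWithinAt (fun s => f s + α*s^2) (f' t + α*(2*t)) (Iio t) t := by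
    intro t ht
    have h1 : HasDerivAt (fun s : ℝ => α * s ^ 2) (α*(2*t)) t := by
      simpa using (hasDerivAt_pow 2 t).const_mul α
    exact (hderiv t ht).add h1.hasDerivWithinAt
  have hL1 : ∀ t ∈ Ioc (0:ℝ) a, ∀ u, 0 ≤ u → u < t →
      (f' t + α*(2*t)) * (t - u) ≤ (f t + α*t^2) - (f u + α*u^2) := by
    intro t ht u hu0 hut
    have hts := hgd t ht
    rw [hasDerivWithinAt_iff_tendsto_slope,
      diff_singleton_eq_self (by simp : t ∉ Iio t)] at hts
    have key : f' t + α*(2*t) ≤ ((f t + α*t^2) - (f u + α*u^2))/(t - u) := by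
      refine le_of_tendsto hts ?_
      filter_upwards [Ioo_mem_nhdsLT_of_mem (show t ∈ Ioc u t from ⟨hut, le_rfl⟩)] with v hv
      have hv1 := hsec t ⟨(lt_of_le_of_lt hu0 hut).le, ht.2⟩ u ⟨hu0, hut.le.trans ht.2⟩ v
        ⟨hu0.trans hv.1.le, hv.2.le.trans ht.2⟩ (ne_of_lt hut) (ne_of_lt hv.2) hv.1.le
      have e1 : ((f u + α*u^2) - (f t + α*t^2))/(u - t)
          = ((f t + α*t^2) - (f u + α*u^2))/(t - u) := by
        rw [show (f u + α*u^2) - (f t + α*t^2) = -((f t + α*t^2) - (f u + α*u^2)) by ring,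
            show u - t = -(t - u) by ring, neg_div_neg_eq]
      rw [slope_def_field]
      rw [e1] at hv1
      exact hv1
    exact (le_div_iff₀ (sub_pos.mpr hut)).mp key
  have hL2 : ∀ t ∈ Ioc (0:ℝ) a, ∀ w, t < w → w ≤ a →
      (f w + α*w^2) - (f t + α*t^2) ≤ (f' t + α*(2*t)) * (w - t) := by
    intro t ht w htw hwa
    have hts := hgd t ht
    rw [hasDerivWithinAt_iff_tendsto_slope,
      diff_singleton_eq_self (by simp : t ∉ Iio t)] at hts
    have key : ((f w + α*w^2) - (f t + α*t^2))/(w - t) ≤ f' t + α*(2*t) := by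
      refine ge_of_tendsto hts ?_
      filter_upwards [Ioo_mem_nhdsLT_of_mem (show t ∈ Ioc (0:ℝ) t from ⟨ht.1, le_rfl⟩)] with v hv
      have hv1 := hsec t ⟨ht.1.le, ht.2⟩ v ⟨hv.1.le, hv.2.le.trans ht.2⟩ w
        ⟨(hv.1.trans (hv.2.trans htw)).le, hwa⟩ (ne_of_lt hv.2) (ne_of_gt htw)
        (hv.2.le.trans htw.le)
      rw [slope_def_field]
      exact hv1
    exact (div_le_iff₀ (sub_pos.mpr htw)).mp key
  have hf'm : ∀ t s : ℝ, 0 < t → t < s → s ≤ a → f' s + α*(2*s) ≤ f' t + α*(2*t) := by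
    intro t s ht0 hts hsa
    have h1 := hL1 s ⟨lt_trans ht0 hts, hsa⟩ t ht0.le hts
    have h2 := hL2 t ⟨ht0, hts.le.trans hsa⟩ s hts hsa
    have h3 : (f' s + α*(2*s)) * (s - t) ≤ (f' t + α*(2*t)) * (s - t) := by linarith
    exact le_of_mul_le_mul_right h3 (sub_pos.mpr hts)
  have hchord : ∀ t s : ℝ, 0 < t → t < s → s ≤ a → (f s + α*s^2) * t ≤ (f t + α*t^2) * s := by
    intro t s ht0 hts hsa
    have h := hsec 0 ⟨le_rfl, ha.le⟩ t ⟨ht0.le, hts.le.trans hsa⟩ s ⟨(ht0.trans hts).le, hsa⟩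
      ht0.ne' (ht0.trans hts).ne' hts.le
    rw [show f 0 + α*(0:ℝ)^2 = 0 by simp [hf0]] at h
    rw [sub_zero, sub_zero, sub_zero, sub_zero, div_le_div_iff₀ (ht0.trans hts) ht0] at h
    exact h
  have hpsi : ∀ t, 0 < t → t < b → -(f t) < f' t * t := by
    intro t ht0 htb
    obtain ⟨z, hzS, htz⟩ := exists_lt_of_lt_csSup hSne (show t < _ from hb ▸ htb)
    obtain ⟨⟨hz0, hza⟩, habs⟩ := hzS
    have h1 : -(f z / z) < f' z := (abs_lt.mp habs).1
    have h1' : -(f z) < f' z * z := by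
      have h := (div_lt_iff₀ hz0).mp (show (-(f z))/z < f' z by rwa [neg_div])
      exact h
    have h2 := hf'm t z ht0 htz hza
    have h3 := hchord t z ht0 htz hza
    have hA : (f' z + α*(2*z)) * (t*z) ≤ (f' t + α*(2*t)) * (t*z) :=
      mul_le_mul_of_nonneg_right h2 (by positivity)
    have h1'' : (-(f z)) * t < f' z * z * t := mul_lt_mul_of_pos_right h1' ht0
    have goal' : (-(f t)) * z < f' t * t * z := by
      nlinarith [hA, h1'', h3, mul_pos (mul_pos hα (mul_pos ht0 hz0)) (sub_pos.mpr htz)]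
    exact lt_of_mul_lt_mul_right goal' hz0.le
  -- limit: f' y ≥ -(f b)/b + 2α(b-y)
  have hyIoc : y ∈ Ioc (0:ℝ) a := ⟨hy0, hyb.le.trans hba⟩
  haveI hNB : (𝓝[Ioo y b] b).NeBot := by
    apply mem_closure_iff_nhdsWithin_neBot.mp
    rw [closure_Ioo hyb.ne]
    exact ⟨hyb.le, le_rfl⟩
  have hbIcc : b ∈ Icc (0:ℝ) a := ⟨hb0.le, hba⟩
  have hfbt : Tendsto f (𝓝[Ioo y b] b) (𝓝 (f b)) :=
    (hcont b hbIcc).mono_left (nhdsWithin_mono b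
      (fun u hu => ⟨(lt_trans hy0 hu.1).le, hu.2.le.trans hba⟩))
  have hid : Tendsto (fun u : ℝ => u) (𝓝[Ioo y b] b) (𝓝 b) :=
    tendsto_id.mono_left nhdsWithin_le_nhds
  have hlim : Tendsto (fun u => -(f u)/u + 2*α*(u - y)) (𝓝[Ioo y b] b)
      (𝓝 (-(f b)/b + 2*α*(b - y))) :=
    ((hfbt.neg.div hid hb0.ne').add ((hid.sub tendsto_const_nhds).const_mul (2*α)))
  have hF1 : -(f b)/b + 2*α*(b - y) ≤ f' y := by
    refine le_of_tendsto hlim ?_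
    filter_upwards [self_mem_nhdsWithin] with u hu
    obtain ⟨huy, hub⟩ := hu
    have hu0 : 0 < u := lt_trans hy0 huy
    have hpu := hpsi u hu0 hub
    have h2 := hf'm y u hy0 huy (hub.le.trans hba)
    have h3 : -(f u)/u < f' u := by
      rw [div_lt_iff₀ hu0]; exact hpu
    linarith
  have hF1' : -(f b) + 2*α*(b - y)*b ≤ f' y * b := by
    have h := mul_le_mul_of_nonneg_right hF1 hb0.le
    have e : (-(f b)/b + 2*α*(b - y))*b = -(f b) + 2*α*(b - y)*b := by
      field_simp
    rw [e] at h
    exact h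
  -- main ingredients
  have hxIcc : x ∈ Icc (0:ℝ) a := ⟨hx0.le, (hxy.trans hyb).le.trans hba⟩
  have hm : 0 < y - x := sub_pos.mpr hxy
  have hp : 0 < b - y := sub_pos.mpr hyb
  have hE2 := hL1 y hyIoc x hx0.le hxy
  have hE1 : ((f b + α*b^2) - (f y + α*y^2))/(b - y) ≤ ((f y + α*y^2) - (f x + α*x^2))/(y - x) := by
    simpa using hconc.slope_anti_adjacent hxIcc hbIcc hxy hyb
  have hE1' : ((f b + α*b^2) - (f y + α*y^2))*(y - x)
      ≤ ((f y + α*y^2) - (f x + α*x^2))*(b - y) := by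
    rw [div_le_div_iff₀ hp hm] at hE1
    exact hE1
  have hfy2 : f' y < α*x - α*y := by
    have h : (f' y + α*(2*y))*(y - x) < (α*(y+x))*(y - x) := by nlinarith [hE2]
    have h' := lt_of_mul_lt_mul_right h hm.le
    linarith
  have hK2 : α*b*((b-y)+(b-x)) < f b := by
    nlinarith [hF1', mul_lt_mul_of_pos_right hfy2 hb0]
  have hfb0 : 0 < f b := by
    have h0 : (0:ℝ) < α*b*((b-y)+(b-x)) := by
      apply mul_pos (mul_pos hα hb0); linarith
    linarith
  have hK1 : α*(b-x)*(b-y) < f y - f b := by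
    have h : (α*(b-x)*(b-y))*(y-x) < (f y - f b)*(y-x) := by
      nlinarith [hE1', mul_pos (sub_pos.mpr hfxy) hp]
    exact lt_of_mul_lt_mul_right h hm.le
  have hd1 : (f x - f y)*(b-y) ≤ (f y - f b)*(y-x) - α*(b-x)*(y-x)*(b-y) := by
    nlinarith [hE1']
  have hd2 : (f x - f y)*b ≤ (y-x)*(f b - α*b*(b-y) - α*b*(b-x)) := by
    nlinarith [mul_le_mul_of_nonneg_right hE2 hb0.le, mul_le_mul_of_nonneg_right hF1' hm.le]
  have hkey : (f x - f y)*x*(f b) < (f y)*(y-x)*((f b) - α*b*(b-x)) :=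
    fratio_endgame hα hx0 hxy hyb (sub_pos.mpr hfxy) hfb0 hd1 hd2 hK1 hK2
  have h1 : (f x - f y) / f y * (x/(y-x)) = ((f x - f y)*x)/((f y)*(y-x)) :=
    div_mul_div_comm _ _ _ _
  have h2 : 1 - α*b*(b-x)/(f b) = ((f b) - α*b*(b-x))/(f b) := by
    field_simp
  rw [h1, h2, div_lt_div_iff₀ (by positivity) hfb0]
  nlinarith [hkey]
end

section
/- Let (f_n)_{n≥1} be a sequence of monotone continuous maps from [0,a] to itself with f_n(0) = 0 for all n, and suppose there exists β > 0 such that each f_n is βγ_n-concave, where γ_n = sup f_n (i.e. x ↦ f_n(x) + βγ_n x² is concave). For x₀, y₀ ∈ (0,a] define x_n = f_n(x_{n-1}) and y_n = f_n(y_{n-1}). Then |x_n - y_n| → 0 as n → ∞. -/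
open Set Filter Topology

/-!
Order the starting points so that `x₀ ≤ y₀`; monotonicity keeps `xₙ ≤ yₙ`. Concavity of
`fₙ + βγₙ x²` on the chord from `0` to `yₙ`, together with `yₙ₊₁ ≤ γₙ₊₁`, gives
`xₙ₊₁ / yₙ₊₁ ≥ xₙ / yₙ + β xₙ (yₙ - xₙ)`. The ratios therefore increase and are bounded by `1`, so
their increments tend to `0`; as `xₙ ≥ (x₀ / y₀) yₙ`, the increment dominates
`β (x₀ / y₀) (yₙ - xₙ)²`. If instead some `yₙ` vanishes, both orbits are `0` from then on.
-/

theorem div_mul_add_le_of_concaveOn_add_sq {a α u v : ℝ} {g : ℝ → ℝ} (hg0 : g 0 = 0)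
    (hconc : ConcaveOn ℝ (Icc 0 a) (fun x => g x + α * x ^ 2))
    (hu : 0 ≤ u) (huv : u ≤ v) (hva : v ≤ a) (hv : 0 < v) :
    u / v * g v + α * u * (v - u) ≤ g u := by
  have hchord := hconc.2 ⟨hv.le, hva⟩ ⟨le_rfl, hv.le.trans hva⟩ (div_nonneg hu hv.le)
    (sub_nonneg.2 (div_le_one_of_le₀ huv hv.le)) (add_sub_cancel _ _)
  have hmid : u / v * v = u := div_mul_cancel₀ u hv.ne'
  simp only [smul_eq_mul, mul_zero, add_zero, hmid, hg0] at hchord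
  have hsq : u / v * (α * v ^ 2) = α * u * v := by field_simp
  linarith

theorem div_add_le_div_apply {a β u v : ℝ} {g : ℝ → ℝ} (hβ : 0 ≤ β)
    (hmap : MapsTo g (Icc 0 a) (Icc 0 a)) (hg0 : g 0 = 0)
    (hconc : ConcaveOn ℝ (Icc 0 a) (fun x => g x + β * sSup (g '' Icc 0 a) * x ^ 2))
    (hu : 0 ≤ u) (huv : u ≤ v) (hva : v ≤ a) (hgv : 0 < g v) :
    u / v + β * u * (v - u) ≤ g u / g v := by
  have hv : 0 < v := (hu.trans huv).lt_of_ne (by rintro rfl; simp [hg0] at hgv)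
  have hsup : g v ≤ sSup (g '' Icc 0 a) :=
    le_csSup (bddAbove_Icc.mono hmap.image_subset) (mem_image_of_mem g ⟨hv.le, hva⟩)
  have hchord := div_mul_add_le_of_concaveOn_add_sq hg0 hconc hu huv hva hv
  have hgap : 0 ≤ β * u * (v - u) := mul_nonneg (mul_nonneg hβ hu) (sub_nonneg.2 huv)
  rw [le_div_iff₀ hgv]
  nlinarith [mul_le_mul_of_nonneg_left hsup hgap]

section Orbit

variable {α : Type*} {s : Set α} {f : ℕ → α → α} {x y : ℕ → α}

theorem orbit_mem (hmap : ∀ n, MapsTo (f n) s s) (hx0 : x 0 ∈ s)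
    (hxs : ∀ n, x (n + 1) = f (n + 1) (x n)) (n : ℕ) : x n ∈ s := by
  induction n with
  | zero => exact hx0
  | succ n ih => rw [hxs n]; exact hmap (n + 1) ih

theorem orbit_le_orbit [Preorder α] (hmap : ∀ n, MapsTo (f n) s s)
    (hmono : ∀ n, MonotoneOn (f n) s) (hx0 : x 0 ∈ s) (hy0 : y 0 ∈ s)
    (hxs : ∀ n, x (n + 1) = f (n + 1) (x n)) (hys : ∀ n, y (n + 1) = f (n + 1) (y n))
    (hxy0 : x 0 ≤ y 0) (n : ℕ) : x n ≤ y n := by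
  induction n with
  | zero => exact hxy0
  | succ n ih =>
    rw [hxs n, hys n]
    exact hmono (n + 1) (orbit_mem hmap hx0 hxs n) (orbit_mem hmap hy0 hys n) ih

theorem orbit_eq_of_isFixedPt {c : α} (hfix : ∀ n, f n c = c)
    (hxs : ∀ n, x (n + 1) = f (n + 1) (x n)) {N : ℕ} (hN : x N = c) {n : ℕ} (hn : N ≤ n) :
    x n = c := by
  induction n, hn using Nat.le_induction with
  | base => exact hN
  | succ n _ ih => rw [hxs n, ih, hfix]

end Orbit

theorem tendsto_zero_of_mul_sq_le_sub_succ {r d : ℕ → ℝ} {c : ℝ} (hr : Monotone r)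
    (hbdd : BddAbove (range r)) (hc : 0 < c) (hd : ∀ n, c * d n ^ 2 ≤ r (n + 1) - r n) :
    Tendsto d atTop (𝓝 0) := by
  have hlim := tendsto_atTop_ciSup hr hbdd
  have hincr : Tendsto (fun n => (r (n + 1) - r n) / c) atTop (𝓝 0) := by
    simpa using ((hlim.comp (tendsto_add_atTop_nat 1)).sub hlim).div_const c
  refine squeeze_zero_norm (fun n => ?_) (by simpa using hincr.sqrt)
  rw [Real.norm_eq_abs]
  exact Real.abs_le_sqrt ((le_div_iff₀' hc).2 (hd n))

theorem tendsto_sub_of_div_add_le_div_succ {β : ℝ} (hβ : 0 < β) {x y : ℕ → ℝ}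
    (hx : ∀ n, 0 ≤ x n) (hle : ∀ n, x n ≤ y n) (hy : ∀ n, 0 < y n) (hx0 : 0 < x 0)
    (hstep : ∀ n, x n / y n + β * x n * (y n - x n) ≤ x (n + 1) / y (n + 1)) :
    Tendsto (fun n => y n - x n) atTop (𝓝 0) := by
  set r : ℕ → ℝ := fun n => x n / y n
  have hgap : ∀ n, 0 ≤ β * x n * (y n - x n) := fun n =>
    mul_nonneg (mul_nonneg hβ.le (hx n)) (sub_nonneg.2 (hle n))
  have hr : Monotone r := monotone_nat_of_le_succ fun n => by linarith [hstep n, hgap n]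
  have hbdd : BddAbove (range r) :=
    ⟨1, by rintro _ ⟨n, rfl⟩; exact div_le_one_of_le₀ (hle n) (hy n).le⟩
  have hr0 : 0 < r 0 := div_pos hx0 (hy 0)
  refine tendsto_zero_of_mul_sq_le_sub_succ hr hbdd (mul_pos hβ hr0) fun n => ?_
  have hlow : r 0 * y n ≤ x n :=
    (le_div_iff₀ (hy n)).1 (hr (Nat.zero_le n))
  have hsq : r 0 * (y n - x n) ^ 2 ≤ x n * (y n - x n) :=
    calc r 0 * (y n - x n) ^ 2 ≤ r 0 * y n * (y n - x n) := by
          nlinarith [mul_nonneg (mul_nonneg hr0.le (sub_nonneg.2 (hle n))) (hx n)]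
      _ ≤ x n * (y n - x n) := mul_le_mul_of_nonneg_right hlow (sub_nonneg.2 (hle n))
  nlinarith [hstep n, mul_le_mul_of_nonneg_left hsq hβ.le]

theorem tendsto_abs_sub_of_orbit_le {a β : ℝ} (hβ : 0 < β) {f : ℕ → ℝ → ℝ}
    (hmap : ∀ n, MapsTo (f n) (Icc 0 a) (Icc 0 a))
    (hmono : ∀ n, MonotoneOn (f n) (Icc 0 a)) (hf0 : ∀ n, f n 0 = 0)
    (hconc : ∀ n, ConcaveOn ℝ (Icc 0 a)
      (fun x => f n x + β * sSup (f n '' Icc 0 a) * x ^ 2))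
    {x y : ℕ → ℝ} (hx0 : x 0 ∈ Ioc 0 a) (hy0 : y 0 ∈ Ioc 0 a)
    (hxs : ∀ n, x (n + 1) = f (n + 1) (x n)) (hys : ∀ n, y (n + 1) = f (n + 1) (y n))
    (hxy0 : x 0 ≤ y 0) :
    Tendsto (fun n => |x n - y n|) atTop (𝓝 0) := by
  have hx := orbit_mem hmap (Ioc_subset_Icc_self hx0) hxs
  have hy := orbit_mem hmap (Ioc_subset_Icc_self hy0) hys
  have hle := orbit_le_orbit hmap hmono (Ioc_subset_Icc_self hx0) (Ioc_subset_Icc_self hy0)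
    hxs hys hxy0
  by_cases hpos : ∀ n, 0 < y n
  · have hstep : ∀ n, x n / y n + β * x n * (y n - x n) ≤ x (n + 1) / y (n + 1) := by
      intro n
      rw [hxs n, hys n]
      exact div_add_le_div_apply hβ.le (hmap _) (hf0 _) (hconc _) (hx n).1 (hle n) (hy n).2
        (hys n ▸ hpos (n + 1))
    simpa [abs_sub_comm] using
      (tendsto_sub_of_div_add_le_div_succ hβ (fun n => (hx n).1) hle hpos hx0.1 hstep).abs
  · obtain ⟨N, hN⟩ := not_forall.1 hpos
    have hyN : y N = 0 := le_antisymm (not_lt.1 hN) (hy N).1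
    refine tendsto_const_nhds.congr' (eventually_atTop.2 ⟨N, fun n hn => ?_⟩)
    have hyn := orbit_eq_of_isFixedPt hf0 hys hyN hn
    have hxn : x n = 0 := le_antisymm (hyn ▸ hle n) (hx n).1
    simp [hxn, hyn]

theorem monotone_equiconcave_contraction_general (a β : ℝ) (hβ : 0 < β)
    (f : ℕ → ℝ → ℝ)
    (hmap : ∀ n, MapsTo (f n) (Icc 0 a) (Icc 0 a))
    (hmono : ∀ n, MonotoneOn (f n) (Icc 0 a))
    (hf0 : ∀ n, f n 0 = 0)
    (hconc : ∀ n, ConcaveOn ℝ (Icc 0 a)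
      (fun x => f n x + β * sSup (f n '' Icc 0 a) * x ^ 2))
    (x y : ℕ → ℝ) (hx0 : x 0 ∈ Ioc (0:ℝ) a) (hy0 : y 0 ∈ Ioc (0:ℝ) a)
    (hxs : ∀ n, x (n + 1) = f (n + 1) (x n))
    (hys : ∀ n, y (n + 1) = f (n + 1) (y n)) :
    Filter.Tendsto (fun n => |x n - y n|) Filter.atTop (nhds 0) := by
  rcases le_total (x 0) (y 0) with hxy | hyx
  · exact tendsto_abs_sub_of_orbit_le hβ hmap hmono hf0 hconc hx0 hy0 hxs hys hxy
  · simpa only [abs_sub_comm] using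
      tendsto_abs_sub_of_orbit_le hβ hmap hmono hf0 hconc hy0 hx0 hys hxs hyx

/-- Theorem (ConcAttr): for an equiconcave sequence of monotone continuous
self-maps of `[0,a]` fixing 0 (each `f n` is `β·γₙ`-concave with `γₙ = sup fₙ`),
any two orbits starting in `(0,a]` approach each other: `|xₙ - yₙ| → 0`. -/
theorem monotone_equiconcave_contraction (a β : ℝ) (ha : 0 < a) (hβ : 0 < β)
    (f : ℕ → ℝ → ℝ)
    (hmap : ∀ n, MapsTo (f n) (Icc 0 a) (Icc 0 a))
    (hcont : ∀ n, ContinuousOn (f n) (Icc 0 a))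
    (hmono : ∀ n, MonotoneOn (f n) (Icc 0 a))
    (hf0 : ∀ n, f n 0 = 0)
    (hconc : ∀ n, ConcaveOn ℝ (Icc 0 a)
      (fun x => f n x + β * sSup (f n '' Icc 0 a) * x ^ 2))
    (x y : ℕ → ℝ) (hx0 : x 0 ∈ Ioc (0:ℝ) a) (hy0 : y 0 ∈ Ioc (0:ℝ) a)
    (hxs : ∀ n, x (n + 1) = f (n + 1) (x n))
    (hys : ∀ n, y (n + 1) = f (n + 1) (y n)) :
    Filter.Tendsto (fun n => |x n - y n|) Filter.atTop (nhds 0) :=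
  monotone_equiconcave_contraction_general a β hβ f hmap hmono hf0 hconc x y hx0 hy0 hxs hys
end

section
/- Let B = {0,1}^ℕ with the one-sided shift R, and define F : B × {0,1} → B × {0,1} by F(x,y) = (R(x), x₀). Then there exists a function φ : B → {0,1} whose graph is a global attractor: for every (x,y) ∈ B × {0,1} there is N such that for all n ≥ N, π₂(Fⁿ(x,y)) = φ(Rⁿ(x)). -/
/-- The one-sided shift on `{0,1}^ℕ`. -/
def shiftNat (x : ℕ → Bool) : ℕ → Bool := fun n => x (n + 1)

/-- The skew product `F(x,y) = (R(x), x₀)` over the one-sided shift. -/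
def Fcoin (p : (ℕ → Bool) × Bool) : (ℕ → Bool) × Bool := (shiftNat p.1, p.1 0)

/-!
It suffices to show that every self-map `f` admits a "predecessor" map `g` with
`g (f^[n+1] x) = f^[n] x` for all large `n`; for the shift, `φ z = (g z) 0` then works.
Pick a base point `r` in each grand orbit (the classes of `f^[m] x = f^[n] y`), periodic if the
class contains a periodic point, and send `z = f^[k+1] r` to `f^[k] r`. This is well defined:
if `r` is periodic, `f` is injective on periodic points; otherwise the forward orbit of `r`
never repeats. Every forward orbit eventually runs along the orbit of its base point.
-/

open Filter

namespace Function

variable {α : Type*} (f : α → α)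

def grandOrbitSetoid : Setoid α where
  r x y := ∃ m n, f^[m] x = f^[n] y
  iseqv := by
    refine ⟨fun x => ⟨0, 0, rfl⟩, fun ⟨m, n, h⟩ => ⟨n, m, h.symm⟩, ?_⟩
    rintro x y z ⟨m, n, hxy⟩ ⟨k, l, hyz⟩
    refine ⟨k + m, n + l, ?_⟩
    rw [iterate_add_apply, hxy, ← iterate_add_apply, add_comm, iterate_add_apply, hyz,
      ← iterate_add_apply]

open Classical in
noncomputable def grandOrbitRep (c : Quotient (grandOrbitSetoid f)) : α :=
  if h : ∃ y ∈ periodicPts f, Quotient.mk _ y = c then h.choose else c.out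

open Classical in
noncomputable def grandOrbitPred (z : α) : α :=
  let r := grandOrbitRep f (Quotient.mk _ z)
  if h : ∃ k, f^[k + 1] r = z then f^[h.choose] r else z

variable {f}

theorem mk_iterate_grandOrbitSetoid (x : α) (n : ℕ) :
    Quotient.mk (grandOrbitSetoid f) (f^[n] x) = Quotient.mk _ x :=
  Quotient.sound ⟨0, n, rfl⟩

theorem mk_grandOrbitRep (c : Quotient (grandOrbitSetoid f)) :
    Quotient.mk _ (grandOrbitRep f c) = c := by
  unfold grandOrbitRep
  split_ifs with h
  · exact h.choose_spec.2
  · exact c.out_eq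

theorem grandOrbitRep_mem_periodicPts {c : Quotient (grandOrbitSetoid f)}
    (h : ∃ y ∈ periodicPts f, Quotient.mk _ y = c) : grandOrbitRep f c ∈ periodicPts f := by
  rw [grandOrbitRep, dif_pos h]
  exact h.choose_spec.1

theorem iterate_mem_periodicPts {x : α} (hx : x ∈ periodicPts f) (n : ℕ) :
    f^[n] x ∈ periodicPts f :=
  (bijOn_periodicPts f).mapsTo.iterate n hx

theorem injective_iterate_of_forall_iterate_notMem_periodicPts {x : α}
    (h : ∀ n, f^[n] x ∉ periodicPts f) : Injective fun n => f^[n] x := by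
  intro m n hmn
  wlog hle : m ≤ n generalizing m n
  · exact (this hmn.symm (le_of_not_ge hle)).symm
  by_contra hne
  refine h m (mk_mem_periodicPts (Nat.sub_pos_of_lt (lt_of_le_of_ne hle hne)) ?_)
  change f^[n - m] (f^[m] x) = f^[m] x
  rw [← iterate_add_apply, Nat.sub_add_cancel hle]
  exact hmn.symm

theorem grandOrbitPred_iterate_succ_grandOrbitRep (c : Quotient (grandOrbitSetoid f)) (k : ℕ) :
    grandOrbitPred f (f^[k + 1] (grandOrbitRep f c)) = f^[k] (grandOrbitRep f c) := by
  set r := grandOrbitRep f c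
  have hc : Quotient.mk _ (f^[k + 1] r) = c :=
    (mk_iterate_grandOrbitSetoid r _).trans (mk_grandOrbitRep c)
  have h : ∃ j, f^[j + 1] r = f^[k + 1] r := ⟨k, rfl⟩
  rw [grandOrbitPred, hc, dif_pos h]
  by_cases hper : ∃ y ∈ periodicPts f, Quotient.mk _ y = c
  · have hr := grandOrbitRep_mem_periodicPts hper
    refine (bijOn_periodicPts f).injOn (iterate_mem_periodicPts hr _) (iterate_mem_periodicPts hr k) ?_
    simpa only [iterate_succ_apply'] using h.choose_spec
  · have hnot : ∀ n, f^[n] r ∉ periodicPts f := fun n hn =>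
      hper ⟨_, hn, (mk_iterate_grandOrbitSetoid r n).trans (mk_grandOrbitRep c)⟩
    rw [Nat.succ_injective (injective_iterate_of_forall_iterate_notMem_periodicPts hnot
      h.choose_spec)]

theorem eventually_grandOrbitPred_iterate_succ (x : α) :
    ∀ᶠ n in atTop, grandOrbitPred f (f^[n + 1] x) = f^[n] x := by
  set c := Quotient.mk (grandOrbitSetoid f) x
  obtain ⟨a, b, hab⟩ := Quotient.exact (mk_grandOrbitRep c)
  have hshift : ∀ n ≥ b, f^[n] x = f^[n - b + a] (grandOrbitRep f c) := fun n hn => by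
    rw [iterate_add_apply, hab, ← iterate_add_apply, Nat.sub_add_cancel hn]
  filter_upwards [eventually_ge_atTop b] with n hn
  rw [hshift n hn, hshift (n + 1) (by omega), Nat.sub_add_comm hn, add_right_comm,
    grandOrbitPred_iterate_succ_grandOrbitRep]

end Function

theorem Fcoin_iterate_succ_snd (x : ℕ → Bool) (y : Bool) (n : ℕ) :
    (Fcoin^[n + 1] (x, y)).2 = (shiftNat^[n] x) 0 := by
  induction n generalizing x with
  | zero => rfl
  | succ n ih => exact ih (shiftNat x)

/-- Theorem (nbm): there exists a function `φ : {0,1}^ℕ → {0,1}` whose graph is a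
global attractor for `F(x,y) = (R(x), x₀)`: for every `(x,y)` there is `N` such that
`π₂(Fⁿ(x,y)) = φ(Rⁿ(x))` for all `n ≥ N`. -/
theorem exists_global_attractor_coin :
    ∃ φ : (ℕ → Bool) → Bool,
      ∀ (x : ℕ → Bool) (y : Bool), ∃ N : ℕ, ∀ n ≥ N,
        (Fcoin^[n] (x, y)).2 = φ (shiftNat^[n] x) := by
  refine ⟨fun z => Function.grandOrbitPred shiftNat z 0, fun x y => ?_⟩
  obtain ⟨N, hN⟩ := eventually_atTop.1 (Function.eventually_grandOrbitPred_iterate_succ (f := shiftNat) x)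
  refine ⟨N + 1, fun n hn => ?_⟩
  obtain ⟨m, rfl⟩ := Nat.exists_eq_add_of_le' (Nat.one_le_of_lt hn)
  rw [Fcoin_iterate_succ_snd, ← hN m (by omega)]
end

section
/- Let B = {0,1}^ℕ with the one-sided shift R and F(x,y) = (R(x), x₀) on B × {0,1}. Let μ be an ergodic shift-invariant probability measure on B, and suppose φ : B → {0,1} is μ-measurable and its graph is an attractor with basin Z × {0,1} for some Z ⊂ B with μ(Z) = 1 (i.e. for every x ∈ Z and y ∈ {0,1}, eventually π₂(Fⁿ(x,y)) = φ(Rⁿ(x))). Then the measure-theoretic entropy h_μ(R) = 0. -/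
/-!
Every point of `Z` eventually lands in the set `C` of points whose coordinates are all predicted
from the future, `x_k = φ(R^{k+1} x)`. Since `C ⊆ R⁻¹ C`, the sets `R⁻ᴺ C` increase and all have
measure `μ C`, so `μ C = 1`. Approximate `φ` within `ε` by a function `g` of `m` coordinates. The
word `x₀ … x_{n-1}` is decoded, from the top down, from the `m` coordinates after it and the error
bits `x_k ⊕ g(R^{k+1} x)`, each of which is `1` with probability at most `ε`. Subadditivity of
entropy gives `H(x₀ … x_{n-1}) ≤ n h(ε) + m log 2`, `h` the binary entropy, so the entropy is at
most `h(ε)` for every `ε`.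
-/

open MeasureTheory

/-- The cylinder set determined by a word `w` of length `n`. -/
def cylinder (n : ℕ) (w : Fin n → Bool) : Set (ℕ → Bool) :=
  {x | ∀ i : Fin n, x i = w i}

/-- The measure-theoretic (Kolmogorov–Sinai) entropy of a shift-invariant measure on
`{0,1}^ℕ`, computed via the coordinate partition, which is a one-sided generator:
`h_μ(R) = lim (1/n) H(cylinders of length n)`. -/
noncomputable def shiftEntropy (μ : Measure (ℕ → Bool)) : ℝ :=
  Filter.atTop.liminf fun n : ℕ =>
    (1 / (n : ℝ)) * ∑ w : Fin n → Bool, Real.negMulLog (μ (cylinder n w)).toReal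

open Real

namespace Real

lemma negMulLog_sum_le {ι : Type*} (s : Finset ι) {f : ι → ℝ} (hf : ∀ i ∈ s, 0 ≤ f i) :
    negMulLog (∑ i ∈ s, f i) ≤ ∑ i ∈ s, negMulLog (f i) := by
  rw [negMulLog, neg_mul, Finset.sum_mul, ← Finset.sum_neg_distrib]
  refine Finset.sum_le_sum fun i hi => ?_
  rcases (hf i hi).eq_or_lt with h0 | h0
  · simp [← h0]
  · have := log_le_log h0 (Finset.single_le_sum hf hi)
    rw [negMulLog]
    nlinarith

lemma sum_negMulLog_le_sum_neg_mul_log {ι : Type*} (s : Finset ι) {p q : ι → ℝ}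
    (hp : ∀ i ∈ s, 0 ≤ p i) (hq : ∀ i ∈ s, 0 ≤ q i) (hpq : ∀ i ∈ s, 0 < p i → 0 < q i)
    (hsum : ∑ i ∈ s, q i ≤ ∑ i ∈ s, p i) :
    ∑ i ∈ s, negMulLog (p i) ≤ ∑ i ∈ s, -(p i * log (q i)) := by
  have key : ∀ i ∈ s, negMulLog (p i) ≤ -(p i * log (q i)) + (q i - p i) := by
    intro i hi
    rcases (hp i hi).eq_or_lt with h0 | h0
    · simp [← h0, hq i hi]
    · have hq0 := hpq i hi h0
      have := mul_le_mul_of_nonneg_left (log_le_sub_one_of_pos (div_pos hq0 h0)) h0.le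
      have hpq' : p i * (q i / p i - 1) = q i - p i := by field_simp
      rw [log_div hq0.ne' h0.ne', hpq'] at this
      rw [negMulLog]
      linarith
  calc ∑ i ∈ s, negMulLog (p i) ≤ ∑ i ∈ s, (-(p i * log (q i)) + (q i - p i)) :=
        Finset.sum_le_sum key
    _ ≤ ∑ i ∈ s, -(p i * log (q i)) := by
        rw [Finset.sum_add_distrib, Finset.sum_sub_distrib]
        linarith

end Real

namespace MeasureTheory

variable {α β γ : Type*} [MeasurableSpace α] {μ : Measure α}

noncomputable def shannonEntropy [Fintype β] (μ : Measure α) (f : α → β) : ℝ :=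
  ∑ b, negMulLog (μ.real (f ⁻¹' {b}))

lemma shannonEntropy_nonneg [Fintype β] [IsProbabilityMeasure μ] (f : α → β) :
    0 ≤ shannonEntropy μ f :=
  Finset.sum_nonneg fun _ _ => negMulLog_nonneg measureReal_nonneg measureReal_le_one

section Measurable

variable [Fintype β] [MeasurableSpace β] [MeasurableSingletonClass β]

lemma sum_measureReal_preimage_singleton_eq_one [IsProbabilityMeasure μ] {f : α → β}
    (hf : Measurable f) : ∑ b, μ.real (f ⁻¹' {b}) = 1 := by
  rw [sum_measureReal_preimage_singleton _ fun b _ => hf (measurableSet_singleton b),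
    Finset.coe_univ, Set.preimage_univ, probReal_univ]

lemma measureReal_comp_preimage_singleton [IsFiniteMeasure μ] [DecidableEq γ] {f : α → β}
    (hf : Measurable f) (g : β → γ) (c : γ) :
    μ.real ((g ∘ f) ⁻¹' {c}) = ∑ b with g b = c, μ.real (f ⁻¹' {b}) := by
  rw [sum_measureReal_preimage_singleton _ fun b _ => hf (measurableSet_singleton b)]
  congr 1
  ext a
  simp

lemma shannonEntropy_comp_le [Fintype γ] [IsFiniteMeasure μ] {f : α → β} (hf : Measurable f)
    (g : β → γ) : shannonEntropy μ (g ∘ f) ≤ shannonEntropy μ f := by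
  classical
  calc shannonEntropy μ (g ∘ f)
      = ∑ c, negMulLog (∑ b with g b = c, μ.real (f ⁻¹' {b})) := by
        simp only [shannonEntropy, measureReal_comp_preimage_singleton hf]
    _ ≤ ∑ c, ∑ b with g b = c, negMulLog (μ.real (f ⁻¹' {b})) :=
        Finset.sum_le_sum fun c _ => negMulLog_sum_le _ fun _ _ => measureReal_nonneg
    _ = shannonEntropy μ f := Finset.sum_fiberwise _ _ _

lemma shannonEntropy_le_of_factorsThrough [Fintype γ] [Nonempty γ] [IsFiniteMeasure μ]
    {f : α → β} (hf : Measurable f) {g : α → γ} (hgf : g.FactorsThrough f) :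
    shannonEntropy μ g ≤ shannonEntropy μ f := by
  have hg : g = Function.extend f g (fun _ => Classical.arbitrary γ) ∘ f :=
    funext fun a => (hgf.extend_apply _ a).symm
  rw [hg]
  exact shannonEntropy_comp_le hf _

end Measurable

variable [IsProbabilityMeasure μ]

/-- Gibbs' inequality against the product of the marginals. -/
lemma shannonEntropy_pi_le_sum {ι : Type*} [Fintype ι] [DecidableEq ι] [Fintype β]
    [MeasurableSpace β] [MeasurableSingletonClass β] {V : α → ι → β}
    (hV : ∀ i, Measurable fun a => V a i) :
    shannonEntropy μ V ≤ ∑ i, shannonEntropy μ fun a => V a i := by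
  classical
  have hVm : Measurable V := measurable_pi_lambda _ hV
  set p : (ι → β) → ℝ := fun v => μ.real (V ⁻¹' {v})
  set r : ι → β → ℝ := fun i b => μ.real ((fun a => V a i) ⁻¹' {b})
  have hmarg : ∀ i b, r i b = ∑ v with v i = b, p v := fun i b =>
    measureReal_comp_preimage_singleton hVm (fun v => v i) b
  have hp_le : ∀ v i, p v ≤ r i (v i) := fun v i =>
    measureReal_mono fun a (ha : V a = v) => by simp [← ha]
  have hlog : ∀ v, -(p v * log (∏ i, r i (v i))) = ∑ i, -(p v * log (r i (v i))) := by
    intro v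
    rcases (measureReal_nonneg : 0 ≤ p v).eq_or_lt with h0 | h0
    · simp [p, ← h0]
    · rw [log_prod fun i _ => (h0.trans_le (hp_le v i)).ne', Finset.mul_sum,
        Finset.sum_neg_distrib]
  calc shannonEntropy μ V
      ≤ ∑ v, -(p v * log (∏ i, r i (v i))) := by
        refine sum_negMulLog_le_sum_neg_mul_log _ (fun _ _ => measureReal_nonneg)
          (fun _ _ => Finset.prod_nonneg fun _ _ => measureReal_nonneg)
          (fun v _ hv => Finset.prod_pos fun i _ => hv.trans_le (hp_le v i)) ?_
        rw [← Fintype.prod_sum, sum_measureReal_preimage_singleton_eq_one hVm]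
        simp only [r, sum_measureReal_preimage_singleton_eq_one (hV _), Finset.prod_const_one,
          le_refl]
    _ = ∑ i, ∑ v, -(p v * log (r i (v i))) := by
        rw [Finset.sum_congr rfl fun v _ => hlog v, Finset.sum_comm]
    _ = ∑ i, shannonEntropy μ fun a => V a i := by
        refine Finset.sum_congr rfl fun i _ => ?_
        rw [← Finset.sum_fiberwise _ (fun v => v i)]
        refine Finset.sum_congr rfl fun b _ => ?_
        rw [Finset.sum_congr rfl fun v hv => by rw [(Finset.mem_filter.1 hv).2],
          Finset.sum_neg_distrib, ← Finset.sum_mul, ← hmarg, negMulLog, neg_mul]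

lemma shannonEntropy_bool {f : α → Bool} (hf : Measurable f) :
    shannonEntropy μ f = binEntropy (μ.real (f ⁻¹' {true})) := by
  have hfalse : f ⁻¹' {false} = (f ⁻¹' {true})ᶜ := by ext; simp
  rw [shannonEntropy, Fintype.sum_bool, hfalse,
    probReal_compl_eq_one_sub (hf (measurableSet_singleton true)),
    binEntropy_eq_negMulLog_add_negMulLog_one_sub]

lemma shannonEntropy_bool_le_binEntropy {f : α → Bool} (hf : Measurable f) {ε : ℝ}
    (hfε : μ.real (f ⁻¹' {true}) ≤ ε) (hε : ε ≤ 2⁻¹) :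
    shannonEntropy μ f ≤ binEntropy ε := by
  rw [shannonEntropy_bool hf]
  exact binEntropy_strictMonoOn.monotoneOn ⟨measureReal_nonneg, hfε.trans hε⟩
    ⟨measureReal_nonneg.trans hfε, hε⟩ hfε

lemma shannonEntropy_bool_le_log_two {f : α → Bool} (hf : Measurable f) :
    shannonEntropy μ f ≤ log 2 := by
  rw [shannonEntropy_bool hf]
  exact binEntropy_le_log_two

end MeasureTheory

lemma MeasureTheory.MeasurePreserving.measure_iUnion_preimage_iterate {α : Type*}
    [MeasurableSpace α] {μ : Measure α} {f : α → α} (hf : MeasurePreserving f μ μ) {s : Set α}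
    (hs : NullMeasurableSet s μ) (hsf : s ⊆ f ⁻¹' s) :
    μ (⋃ n, f^[n] ⁻¹' s) = μ s := by
  have hmono : Monotone fun n => f^[n] ⁻¹' s := monotone_nat_of_le_succ fun n => by
    rw [Function.iterate_succ', Set.preimage_comp]
    exact Set.preimage_mono hsf
  rw [hmono.measure_iUnion]
  simp only [(hf.iterate _).measure_preimage hs, ciSup_const]

lemma shiftNat_iterate_apply (k : ℕ) (x : ℕ → Bool) (j : ℕ) : shiftNat^[k] x j = x (j + k) := by
  induction k generalizing x with
  | zero => rfl
  | succ k ih => rw [Function.iterate_succ_apply, ih, shiftNat, Nat.add_assoc]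

lemma measurable_shiftNat : Measurable shiftNat :=
  measurable_pi_lambda _ fun n => measurable_pi_apply (n + 1)

lemma Fcoin_iterate_succ (n : ℕ) (x : ℕ → Bool) (y : Bool) :
    Fcoin^[n + 1] (x, y) = (shiftNat^[n + 1] x, x n) := by
  induction n generalizing x y with
  | zero => rfl
  | succ n ih =>
    rw [Function.iterate_succ_apply, Fcoin, ih, ← Function.iterate_succ_apply]
    simp [shiftNat]

/-- The set `C = ⋂ₙ R⁻ⁿ(A)`, `A = {x | x₀ = φ(R x)}`. -/
def predictedBy (φ : (ℕ → Bool) → Bool) : Set (ℕ → Bool) :=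
  {x | ∀ k, x k = φ (shiftNat^[k + 1] x)}

lemma measurableSet_predictedBy {φ : (ℕ → Bool) → Bool} (hφ : Measurable φ) :
    MeasurableSet (predictedBy φ) := by
  simp only [predictedBy, Set.ofPred_forall]
  exact MeasurableSet.iInter fun k =>
    measurableSet_eq_fun (measurable_pi_apply k) (hφ.comp (measurable_shiftNat.iterate _))

lemma predictedBy_subset_preimage_shiftNat (φ : (ℕ → Bool) → Bool) :
    predictedBy φ ⊆ shiftNat ⁻¹' predictedBy φ := fun x hx k => by
  rw [← Function.iterate_succ_apply]
  exact hx (k + 1)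

lemma subset_iUnion_preimage_predictedBy {φ : (ℕ → Bool) → Bool} {Z : Set (ℕ → Bool)}
    (hattr : ∀ x ∈ Z, ∀ y : Bool, ∃ N : ℕ, ∀ n ≥ N,
      (Fcoin^[n] (x, y)).2 = φ (shiftNat^[n] x)) :
    Z ⊆ ⋃ N, shiftNat^[N] ⁻¹' predictedBy φ := fun x hx => by
  obtain ⟨N, hN⟩ := hattr x hx false
  refine Set.mem_iUnion.2 ⟨N, fun k => ?_⟩
  have h := hN (N + k + 1) (by omega)
  rw [Fcoin_iterate_succ] at h
  rw [shiftNat_iterate_apply, ← Function.iterate_add_apply, show k + 1 + N = N + k + 1 by omega,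
    Nat.add_comm k N]
  exact h

lemma ae_mem_predictedBy_of_attractor {μ : Measure (ℕ → Bool)} [IsProbabilityMeasure μ]
    (hμ : MeasurePreserving shiftNat μ μ) {φ : (ℕ → Bool) → Bool} (hφ : Measurable φ)
    {Z : Set (ℕ → Bool)} (hZ : μ Z = 1)
    (hattr : ∀ x ∈ Z, ∀ y : Bool, ∃ N : ℕ, ∀ n ≥ N,
      (Fcoin^[n] (x, y)).2 = φ (shiftNat^[n] x)) :
    ∀ᵐ x ∂μ, x ∈ predictedBy φ := by
  have hC := (measurableSet_predictedBy hφ).nullMeasurableSet (μ := μ)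
  rw [ae_mem_iff_measure_eq hC, measure_univ, ← hμ.measure_iUnion_preimage_iterate hC
    (predictedBy_subset_preimage_shiftNat φ)]
  exact le_antisymm prob_le_one (hZ ▸ measure_mono (subset_iUnion_preimage_predictedBy hattr))

lemma exists_dependsOn_Iio_measureReal_ne_lt {X : Type*} [MeasurableSpace X]
    (μ : Measure (ℕ → X)) [IsFiniteMeasure μ] {f : (ℕ → X) → Bool} (hf : Measurable f)
    {ε : ℝ} (hε : 0 < ε) :
    ∃ (m : ℕ) (g : (ℕ → X) → Bool), Measurable g ∧ DependsOn g (Set.Iio m) ∧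
      μ.real {x | f x ≠ g x} < ε := by
  classical
  have hdense : μ.MeasureDense (measurableCylinders fun _ : ℕ => X) :=
    .of_generateFrom_isSetAlgebra_finite μ
      ⟨empty_mem_measurableCylinders _, fun _ => compl_mem_measurableCylinders,
        fun _ _ => union_mem_measurableCylinders⟩ generateFrom_measurableCylinders.symm
  obtain ⟨t, ht, hst⟩ := hdense.approx _ (hf (measurableSet_singleton true)) (by finiteness) ε hε
  have htm := MeasurableSet.of_mem_measurableCylinders ht
  rw [measurableCylinders_nat] at ht
  simp only [Set.mem_iUnion, Set.mem_singleton_iff] at ht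
  obtain ⟨a, S, -, rfl⟩ := ht
  refine ⟨a + 1, fun x => decide (x ∈ MeasureTheory.cylinder (Finset.Iic a) S),
    measurable_to_bool (by convert htm; ext; simp), fun x y hxy => ?_, ?_⟩
  · have : (Finset.Iic a).restrict x = (Finset.Iic a).restrict y :=
      funext fun i => hxy i (Nat.lt_succ_of_le (Finset.mem_Iic.1 i.2))
    simp only [mem_cylinder, this]
  · refine ENNReal.toReal_lt_of_lt_ofReal (lt_of_le_of_lt (measure_mono fun x hx => ?_) hst)
    cases h : f x <;> simp_all [Set.mem_symmDiff]

open Filter Topology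

section Coding

def errorBit (g : (ℕ → Bool) → Bool) (k : ℕ) (x : ℕ → Bool) : Bool :=
  xor (x k) (g (shiftNat^[k + 1] x))

def errorCode (g : (ℕ → Bool) → Bool) (n m : ℕ) (x : ℕ → Bool) : Fin n ⊕ Fin m → Bool :=
  Sum.elim (fun k => errorBit g k x) fun i => x (n + i)

variable {g : (ℕ → Bool) → Bool} {m : ℕ}

lemma measurable_errorBit (hg : Measurable g) (k : ℕ) : Measurable (errorBit g k) :=
  (measurable_of_countable fun p : Bool × Bool => xor p.1 p.2).comp
    ((measurable_pi_apply k).prodMk (hg.comp (measurable_shiftNat.iterate _)))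

lemma eq_of_errorBit_eq (hg : DependsOn g (Set.Iio m)) {n : ℕ} {x y : ℕ → Bool}
    (herr : ∀ k < n, errorBit g k x = errorBit g k y) (htail : ∀ i < m, x (n + i) = y (n + i)) :
    ∀ j < n + m, x j = y j := by
  intro j
  induction j using Nat.strong_decreasing_induction with
  | base => exact ⟨n + m, fun j hj hj' => absurd hj' (by omega)⟩
  | step j ih =>
    intro hj
    by_cases hjn : n ≤ j
    · simpa [Nat.add_sub_cancel' hjn] using htail (j - n) (by omega)
    · have hfut : g (shiftNat^[j + 1] x) = g (shiftNat^[j + 1] y) := hg fun i hi => by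
        rw [shiftNat_iterate_apply, shiftNat_iterate_apply]
        exact ih _ (by omega) (by simp at hi; omega)
      have h := herr j (by omega)
      rwa [errorBit, errorBit, hfut, Bool.xor_left_inj] at h

lemma factorsThrough_errorCode (hg : DependsOn g (Set.Iio m)) (n : ℕ) :
    (fun (x : ℕ → Bool) (i : Fin n) => x i).FactorsThrough (errorCode g n m) :=
  fun x y h => funext fun i =>
    eq_of_errorBit_eq hg (fun k hk => congrFun h (.inl ⟨k, hk⟩))
      (fun j hj => congrFun h (.inr ⟨j, hj⟩)) i (by omega)

variable {μ : Measure (ℕ → Bool)} [IsProbabilityMeasure μ] {φ : (ℕ → Bool) → Bool}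

lemma measureReal_errorBit_le (hμ : MeasurePreserving shiftNat μ μ)
    (hpred : ∀ᵐ x ∂μ, x ∈ predictedBy φ) (hφ : Measurable φ) (hg : Measurable g) (k : ℕ) :
    μ.real (errorBit g k ⁻¹' {true}) ≤ μ.real {x | φ x ≠ g x} := by
  have hsub : ∀ᵐ x ∂μ,
      x ∈ errorBit g k ⁻¹' {true} → x ∈ shiftNat^[k + 1] ⁻¹' {x | φ x ≠ g x} := by
    filter_upwards [hpred] with x hx herr
    simp only [Set.mem_preimage, Set.mem_singleton_iff, errorBit, hx k] at herr
    simpa using herr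
  calc μ.real (errorBit g k ⁻¹' {true})
      ≤ μ.real (shiftNat^[k + 1] ⁻¹' {x | φ x ≠ g x}) :=
        ENNReal.toReal_mono (measure_ne_top μ _) (measure_mono_ae hsub)
    _ = μ.real {x | φ x ≠ g x} :=
        (hμ.iterate _).measureReal_preimage (measurableSet_eq_fun hφ hg).compl.nullMeasurableSet

lemma shannonEntropy_restrict_le (hμ : MeasurePreserving shiftNat μ μ)
    (hpred : ∀ᵐ x ∂μ, x ∈ predictedBy φ) (hφ : Measurable φ) (hg : Measurable g)
    (hgm : DependsOn g (Set.Iio m)) {ε : ℝ} (hgε : μ.real {x | φ x ≠ g x} ≤ ε) (hε : ε ≤ 2⁻¹)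
    (n : ℕ) :
    shannonEntropy μ (fun (x : ℕ → Bool) (i : Fin n) => x i) ≤ n * binEntropy ε + m * log 2 := by
  have hcode : ∀ s, Measurable fun x => errorCode g n m x s := by
    rintro (k | i)
    exacts [measurable_errorBit hg k, measurable_pi_apply _]
  calc shannonEntropy μ (fun (x : ℕ → Bool) (i : Fin n) => x i)
      ≤ shannonEntropy μ (errorCode g n m) :=
        shannonEntropy_le_of_factorsThrough (measurable_pi_lambda _ hcode)
          (factorsThrough_errorCode hgm n)
    _ ≤ ∑ s, shannonEntropy μ fun x => errorCode g n m x s := shannonEntropy_pi_le_sum hcode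
    _ = ∑ k : Fin n, shannonEntropy μ (errorBit g k)
          + ∑ i : Fin m, shannonEntropy μ fun x => x (n + i) := Fintype.sum_sum_type _
    _ ≤ ∑ _k : Fin n, binEntropy ε + ∑ _i : Fin m, log 2 := by
        gcongr with k _ i
        · exact shannonEntropy_bool_le_binEntropy (measurable_errorBit hg k)
            ((measureReal_errorBit_le hμ hpred hφ hg k).trans hgε) hε
        · exact shannonEntropy_bool_le_log_two (measurable_pi_apply _)
    _ = n * binEntropy ε + m * log 2 := by simp

end Coding

lemma exists_pos_binEntropy_lt {δ : ℝ} (hδ : 0 < δ) :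
    ∃ ε, 0 < ε ∧ ε ≤ 2⁻¹ ∧ binEntropy ε < δ := by
  have hsmall : ∀ᶠ ε in 𝓝 (0 : ℝ), binEntropy ε < δ ∧ ε ≤ 2⁻¹ :=
    ((binEntropy_continuous.tendsto' 0 0 binEntropy_zero).eventually (gt_mem_nhds hδ)).and
      (ge_mem_nhds (by norm_num))
  obtain ⟨ε, ⟨hεδ, hε⟩, hε0⟩ :=
    ((hsmall.filter_mono nhdsWithin_le_nhds).and (self_mem_nhdsWithin (s := Set.Ioi 0))).exists
  exact ⟨ε, hε0, hε, hεδ⟩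

lemma shiftEntropy_eq_liminf (μ : Measure (ℕ → Bool)) :
    shiftEntropy μ =
      atTop.liminf fun n : ℕ => (1 / (n : ℝ)) * shannonEntropy μ fun x (i : Fin n) => x i := by
  have hcyl : ∀ n (w : Fin n → Bool), cylinder n w = (fun x (i : Fin n) => x i) ⁻¹' {w} :=
    fun n w => Set.ext fun x => funext_iff.symm
  simp only [shiftEntropy, shannonEntropy, hcyl, Measure.real]

lemma tendsto_shannonEntropy_restrict_div {μ : Measure (ℕ → Bool)} [IsProbabilityMeasure μ]
    (hμ : MeasurePreserving shiftNat μ μ) {φ : (ℕ → Bool) → Bool} (hφ : Measurable φ)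
    (hpred : ∀ᵐ x ∂μ, x ∈ predictedBy φ) :
    Tendsto (fun n : ℕ => (1 / (n : ℝ)) * shannonEntropy μ fun x (i : Fin n) => x i)
      atTop (𝓝 0) := by
  refine tendsto_order.2 ⟨fun δ hδ => .of_forall fun n => hδ.trans_le ?_, fun δ hδ => ?_⟩
  · exact mul_nonneg (by positivity) (shannonEntropy_nonneg _)
  obtain ⟨ε, hε0, hε, hεδ⟩ := exists_pos_binEntropy_lt (half_pos hδ)
  obtain ⟨m, g, hg, hgm, hgε⟩ := exists_dependsOn_Iio_measureReal_ne_lt μ hφ hε0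
  filter_upwards [(tendsto_const_div_atTop_nhds_zero_nat (m * log 2)).eventually
    (gt_mem_nhds (half_pos hδ)), eventually_gt_atTop 0] with n hn hn0
  calc (1 / (n : ℝ)) * shannonEntropy μ (fun x (i : Fin n) => x i)
      ≤ (1 / (n : ℝ)) * (n * binEntropy ε + m * log 2) := by
        gcongr
        exact shannonEntropy_restrict_le hμ hpred hφ hg hgm hgε.le hε n
    _ = binEntropy ε + m * log 2 / n := by field_simp
    _ < δ := by linarith

/-- Theorem (model): if `μ` is an ergodic shift-invariant probability measure on
`{0,1}^ℕ` and there is a μ-measurable `φ` whose graph is an attractor for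
`F(x,y) = (R(x), x₀)` with basin `Z × {0,1}`, `μ(Z) = 1`, then `h_μ(R) = 0`. -/
theorem measurable_attractor_implies_zero_entropy
    (μ : Measure (ℕ → Bool)) [IsProbabilityMeasure μ]
    (herg : Ergodic shiftNat μ)
    (φ : (ℕ → Bool) → Bool) (hφ : Measurable φ)
    (Z : Set (ℕ → Bool)) (hZ : μ Z = 1)
    (hattr : ∀ x ∈ Z, ∀ y : Bool, ∃ N : ℕ, ∀ n ≥ N,
      (Fcoin^[n] (x, y)).2 = φ (shiftNat^[n] x)) :
    shiftEntropy μ = 0 := by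
  have hμ := herg.toMeasurePreserving
  rw [shiftEntropy_eq_liminf]
  exact (tendsto_shannonEntropy_restrict_div hμ hφ
    (ae_mem_predictedBy_of_attractor hμ hφ hZ hattr)).liminf_eq
end

section
/- Let F(θ,x) = (R(θ), ψ_θ(x)) be an isoclinic equiconcave skew product on B × [0,a]: each ψ_θ : [0,a] → [0,a] satisfies ψ_θ(0) = 0, there is β > 0 such that each ψ_θ is βγ_θ-concave (γ_θ = sup ψ_θ), and ψ_θ([0,a]) ⊆ [0, b_{R(θ)}) where b_σ is the isoclinic point of ψ_σ. Call θ pinching if ψ_{Rⁿ(θ)} ≡ 0 for infinitely many n ≥ 0, and call φ : B → [0,a] preinvariant if for each θ there is N with ψ_{Rⁿ(θ)}(φ(Rⁿ(θ))) = φ(R^{n+1}(θ)) for all n ≥ N. If φ is preinvariant and φ(θ) > 0 whenever θ is not pinching, then for every (θ,x) whose forward F-orbit never meets B × {0}, we have |π₂(Fⁿ(θ,x)) − φ(Rⁿ(θ))| → 0 as n → ∞. -/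
/-!
Fix a fiber map `f`, `c`-concave with `c = β sup f`, and `0 < u ≤ v` below its isoclinic point.
Concavity of `f + c x²` makes `f x / x` decrease at rate at least `c`; below the isoclinic point
the left derivative of `x f x` is nonnegative, and concavity upgrades this to
`u f u + c u (v - u)² ≤ v f v`. Together these shrink the ratio `max / min` of `f u, f v` below
`v / u` by the factor `1 + (β / a) u (v - u)²`.

The orbit of `x` never reaches `0`, so `θ` is not pinching and `φ` is positive along its orbit;
eventually both sequences follow the same fiber maps below the isoclinic points. Their ratio `ρₙ`
is then nonincreasing and at least `1`, hence converges, and `ρₙ - ρₙ₊₁ → 0` dominates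
`(β / a) min · gap²`. Since `gap ≤ ρ₀ · min`, the cube of the gap tends to `0`.
-/

open Set Filter Topology

lemma ConcaveOn.slope_le_of_hasDerivWithinAt_Iio_of_mem_nhdsLT {S : Set ℝ} {f : ℝ → ℝ}
    {x y d : ℝ} (hfc : ConcaveOn ℝ S f) (hS : S ∈ 𝓝[<] x) (hy : y ∈ S)
    (hxy : x < y) (hf' : HasDerivWithinAt f d (Iio x) x) :
    slope f x y ≤ d := by
  apply ge_of_tendsto ((hasDerivWithinAt_iff_tendsto_slope' self_notMem_Iio).mp hf')
  filter_upwards [hS, self_mem_nhdsWithin] with t ht (htx : t < x)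
  rw [slope_comm f x t, slope_def_field, slope_def_field]
  exact hfc.slope_anti_adjacent ht hy htx hxy

lemma HasDerivWithinAt.add_const_mul_sq {f : ℝ → ℝ} {d w : ℝ} {s : Set ℝ}
    (hf : HasDerivWithinAt f d s w) (c : ℝ) :
    HasDerivWithinAt (fun x => f x + c * x ^ 2) (d + 2 * c * w) s w := by
  have h : HasDerivAt (fun x : ℝ => c * x ^ 2) (2 * c * w) w := by
    simpa [mul_comm, mul_left_comm, mul_assoc] using (hasDerivAt_pow 2 w).const_mul c
  exact hf.add h.hasDerivWithinAt

noncomputable def isoclinicPoint (a : ℝ) (f f' : ℝ → ℝ) : ℝ :=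
  sSup {x | x ∈ Ioc 0 a ∧ |f' x| < f x / x}

section QuadraticallyConcave

variable {a c u v : ℝ} {f f' : ℝ → ℝ}

lemma div_le_div_sub_of_concaveOn_add_sq
    (hconc : ConcaveOn ℝ (Icc 0 a) (fun x => f x + c * x ^ 2)) (hf0 : f 0 = 0)
    (hu : 0 < u) (huv : u ≤ v) (hva : v ≤ a) :
    f v / v ≤ f u / u - c * (v - u) := by
  rcases huv.eq_or_lt with rfl | huv
  · simp
  have hv : 0 < v := hu.trans huv
  have h := hconc.slope_anti (x := 0) ⟨le_rfl, hv.le.trans hva⟩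
    ⟨⟨hu.le, huv.le.trans hva⟩, hu.ne'⟩ ⟨⟨hv.le, hva⟩, hv.ne'⟩ huv.le
  have hslope : ∀ w ≠ 0, slope (fun x => f x + c * x ^ 2) 0 w = f w / w + c * w := by
    intro w hw
    rw [slope_def_field, hf0]
    field_simp
    ring
  rw [hslope v hv.ne', hslope u hu.ne'] at h
  linarith

lemma neg_div_le_of_lt_isoclinicPoint
    (hconc : ConcaveOn ℝ (Icc 0 a) (fun x => f x + c * x ^ 2)) (hf0 : f 0 = 0) (hc : 0 ≤ c)
    (hderiv : ∀ x ∈ Ioc (0:ℝ) a, HasDerivWithinAt f (f' x) (Iio x) x)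
    (hv : 0 < v) (hvb : v < isoclinicPoint a f f') :
    -(f v / v) ≤ f' v := by
  have hne : {x | x ∈ Ioc 0 a ∧ |f' x| < f x / x}.Nonempty := by
    by_contra h
    rw [not_nonempty_iff_eq_empty] at h
    rw [isoclinicPoint, h, Real.sSup_empty] at hvb
    exact hv.not_gt hvb
  obtain ⟨x₀, ⟨⟨hx₀, hx₀a⟩, hiso⟩, hvx₀⟩ := exists_lt_of_lt_csSup hne hvb
  have hva : v ≤ a := hvx₀.le.trans hx₀a
  have hvmem : v ∈ Icc 0 a := ⟨hv.le, hva⟩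
  have hx₀mem : x₀ ∈ Icc 0 a := ⟨hx₀.le, hx₀a⟩
  have hderiv_x₀ : f' x₀ + 2 * c * x₀ ≤ slope (fun x => f x + c * x ^ 2) v x₀ :=
    hconc.le_slope_of_hasDerivWithinAt_Iio hvmem hx₀mem hvx₀
      ((hderiv x₀ ⟨hx₀, hx₀a⟩).add_const_mul_sq c)
  have hderiv_v : slope (fun x => f x + c * x ^ 2) v x₀ ≤ f' v + 2 * c * v :=
    hconc.slope_le_of_hasDerivWithinAt_Iio_of_mem_nhdsLT (Icc_mem_nhdsLT_of_mem ⟨hv, hva⟩)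
      hx₀mem hvx₀ ((hderiv v ⟨hv, hva⟩).add_const_mul_sq c)
  have hratio := div_le_div_sub_of_concaveOn_add_sq hconc hf0 hv hvx₀.le hx₀a
  have hx₀slope : -(f x₀ / x₀) < f' x₀ := (abs_lt.mp hiso).1
  nlinarith [mul_nonneg hc (sub_nonneg.mpr hvx₀.le)]

lemma mul_add_le_mul_of_concaveOn_add_sq
    (hconc : ConcaveOn ℝ (Icc 0 a) (fun x => f x + c * x ^ 2)) {d : ℝ}
    (hf' : HasDerivWithinAt f d (Iio v) v) (hd : -(f v / v) ≤ d) (hfv : 0 ≤ f v)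
    (hu : 0 < u) (huv : u ≤ v) (hva : v ≤ a) :
    u * f u + c * u * (v - u) ^ 2 ≤ v * f v := by
  rcases huv.eq_or_lt with rfl | huv
  · simp
  have hv : 0 < v := hu.trans huv
  have hslope := hconc.le_slope_of_hasDerivWithinAt_Iio ⟨hu.le, huv.le.trans hva⟩ ⟨hv.le, hva⟩
    huv (hf'.add_const_mul_sq c)
  rw [slope_def_field, le_div_iff₀ (sub_pos.mpr huv)] at hslope
  have hvd : -f v ≤ v * d := by
    have := mul_le_mul_of_nonneg_left hd hv.le
    rwa [mul_neg, mul_div_cancel₀ _ hv.ne'] at this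
  refine le_of_mul_le_mul_left ?_ hv
  nlinarith [mul_le_mul_of_nonneg_left hslope (mul_nonneg hu.le hv.le),
    mul_le_mul_of_nonneg_left hvd (mul_nonneg hu.le (sub_nonneg.mpr huv.le)),
    mul_nonneg (sq_nonneg (v - u)) hfv]

end QuadraticallyConcave

noncomputable def maxMinRatio (x y : ℝ) : ℝ := max x y / min x y

lemma maxMinRatio_comm (x y : ℝ) : maxMinRatio x y = maxMinRatio y x := by
  rw [maxMinRatio, maxMinRatio, max_comm, min_comm]

lemma one_le_maxMinRatio {x y : ℝ} (hx : 0 < x) (hy : 0 < y) : 1 ≤ maxMinRatio x y :=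
  (one_le_div (lt_min hx hy)).mpr min_le_max

lemma mul_max_le_mul_min_of_lt_isoclinicPoint {a β u v : ℝ} {f f' : ℝ → ℝ}
    (hmap : MapsTo f (Icc 0 a) (Icc 0 a)) (hf0 : f 0 = 0)
    (hconc : ConcaveOn ℝ (Icc 0 a) (fun x => f x + β * sSup (f '' Icc 0 a) * x ^ 2))
    (hderiv : ∀ x ∈ Ioc (0:ℝ) a, HasDerivWithinAt f (f' x) (Iio x) x) (hβ : 0 ≤ β)
    (hu : 0 < u) (huv : u ≤ v) (hva : v ≤ a) (hvb : v < isoclinicPoint a f f') :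
    (1 + β / a * u * (v - u) ^ 2) * (u * max (f u) (f v)) ≤ v * min (f u) (f v) := by
  set γ := sSup (f '' Icc 0 a)
  have hv : 0 < v := hu.trans_le huv
  have hua : u ≤ a := huv.trans hva
  have ha : 0 < a := hu.trans_le hua
  have hγ : ∀ x ∈ Icc 0 a, f x ≤ γ := fun x hx =>
    le_csSup ⟨a, by rintro _ ⟨y, hy, rfl⟩; exact (hmap hy).2⟩ ⟨x, hx, rfl⟩
  have hfu : 0 ≤ f u := (hmap ⟨hu.le, hua⟩).1
  have hfv : 0 ≤ f v := (hmap ⟨hv.le, hva⟩).1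
  have hc : 0 ≤ β * γ := mul_nonneg hβ (hfu.trans (hγ u ⟨hu.le, hua⟩))
  have hκ : 0 ≤ β / a * u * (v - u) := mul_nonneg (by positivity) (sub_nonneg.mpr huv)
  rcases le_total (f u) (f v) with h | h
  · rw [max_eq_right h, min_eq_left h]
    have hdiv := div_le_div_sub_of_concaveOn_add_sq hconc hf0 hu huv hva
    rw [div_le_iff₀ hv, sub_mul, div_mul_eq_mul_div, le_sub_iff_add_le, le_div_iff₀ hu] at hdiv
    have hgap : u * (v - u) * f v ≤ a * v * γ :=
      mul_le_mul (mul_le_mul hua (by linarith) (sub_nonneg.mpr huv) ha.le)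
        (hγ v ⟨hv.le, hva⟩) hfv (by positivity)
    calc (1 + β / a * u * (v - u) ^ 2) * (u * f v)
        = u * f v + β / a * u * (v - u) * (u * (v - u) * f v) := by ring
      _ ≤ u * f v + β / a * u * (v - u) * (a * v * γ) := by gcongr
      _ = u * f v + β * γ * (v - u) * v * u := by field_simp
      _ ≤ v * f u := by linarith
  · rw [max_eq_left h, min_eq_right h]
    have hmul := mul_add_le_mul_of_concaveOn_add_sq hconc (hderiv v ⟨hv, hva⟩)
      (neg_div_le_of_lt_isoclinicPoint hconc hf0 hc hderiv hv hvb) hfv hu huv hva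
    have hgap : u * f u ≤ a * γ :=
      mul_le_mul hua (hγ u ⟨hu.le, hua⟩) hfu ha.le
    calc (1 + β / a * u * (v - u) ^ 2) * (u * f u)
        = u * f u + β / a * u * (v - u) ^ 2 * (u * f u) := by ring
      _ ≤ u * f u + β / a * u * (v - u) ^ 2 * (a * γ) := by gcongr
      _ = u * f u + β * γ * u * (v - u) ^ 2 := by field_simp
      _ ≤ v * f v := hmul

lemma maxMinRatio_apply_mul_le_of_lt_isoclinicPoint {a β u v : ℝ} {f f' : ℝ → ℝ}
    (hmap : MapsTo f (Icc 0 a) (Icc 0 a)) (hf0 : f 0 = 0)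
    (hconc : ConcaveOn ℝ (Icc 0 a) (fun x => f x + β * sSup (f '' Icc 0 a) * x ^ 2))
    (hderiv : ∀ x ∈ Ioc (0:ℝ) a, HasDerivWithinAt f (f' x) (Iio x) x) (hβ : 0 ≤ β)
    (hu : u ∈ Ioc 0 a) (hv : v ∈ Ioc 0 a)
    (hub : u < isoclinicPoint a f f') (hvb : v < isoclinicPoint a f f')
    (hfu : 0 < f u) (hfv : 0 < f v) :
    maxMinRatio (f u) (f v) * (1 + β / a * min u v * (u - v) ^ 2) ≤ maxMinRatio u v := by
  wlog huv : u ≤ v generalizing u v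
  · rw [maxMinRatio_comm, min_comm, ← neg_sub, neg_sq, maxMinRatio_comm u]
    exact this hv hu hvb hub hfv hfu (le_of_not_ge huv)
  have h := mul_max_le_mul_min_of_lt_isoclinicPoint hmap hf0 hconc hderiv hβ hu.1 huv hv.2 hvb
  rw [maxMinRatio, maxMinRatio, min_eq_left huv, max_eq_right huv, ← neg_sub, neg_sq,
    div_mul_eq_mul_div, div_le_div_iff₀ (lt_min hfu hfv) hu.1]
  linarith

lemma tendsto_zero_of_tendsto_pow_zero {u : ℕ → ℝ} {k : ℕ} (hk : k ≠ 0) (hu : ∀ n, 0 ≤ u n)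
    (h : Tendsto (fun n => u n ^ k) atTop (𝓝 0)) : Tendsto u atTop (𝓝 0) := by
  have h' := h.rpow_const (p := (k⁻¹ : ℝ)) (Or.inr (by positivity))
  rw [Real.zero_rpow (by positivity)] at h'
  simpa only [Real.pow_rpow_inv_natCast (hu _) hk] using h'

theorem tendsto_abs_sub_of_maxMinRatio_contraction {p q : ℕ → ℝ} {c : ℝ} (hc : 0 < c)
    (hp : ∀ n, 0 < p n) (hq : ∀ n, 0 < q n)
    (hstep : ∀ n, maxMinRatio (p (n + 1)) (q (n + 1)) *
      (1 + c * min (p n) (q n) * (p n - q n) ^ 2) ≤ maxMinRatio (p n) (q n)) :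
    Tendsto (fun n => |p n - q n|) atTop (𝓝 0) := by
  set ρ := fun n => maxMinRatio (p n) (q n)
  have hρ1 : ∀ n, 1 ≤ ρ n := fun n => one_le_maxMinRatio (hp n) (hq n)
  have hmin : ∀ n, 0 < min (p n) (q n) := fun n => lt_min (hp n) (hq n)
  have hgain : ∀ n, c * min (p n) (q n) * (p n - q n) ^ 2 ≤ ρ n - ρ (n + 1) := fun n => by
    have := mul_nonneg (mul_nonneg hc.le (hmin n).le) (sq_nonneg (p n - q n))
    nlinarith [hstep n, hρ1 (n + 1)]
  have hanti : Antitone ρ := antitone_nat_of_succ_le fun n => by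
    have := mul_nonneg (mul_nonneg hc.le (hmin n).le) (sq_nonneg (p n - q n))
    linarith [hgain n]
  have hdiff : Tendsto (fun n => ρ n - ρ (n + 1)) atTop (𝓝 0) := by
    have hlim := tendsto_atTop_ciInf hanti ⟨1, by rintro _ ⟨n, rfl⟩; exact hρ1 n⟩
    simpa using hlim.sub (hlim.comp (tendsto_add_atTop_nat 1))
  have hcube : ∀ n, |p n - q n| ^ 3 ≤ ρ 0 * (ρ n - ρ (n + 1)) / c := fun n => by
    have hgap : |p n - q n| ≤ ρ 0 * min (p n) (q n) := by
      have hmax : max (p n) (q n) = ρ n * min (p n) (q n) :=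
        (div_mul_cancel₀ _ (hmin n).ne').symm
      rw [← max_sub_min_eq_abs']
      nlinarith [hanti (Nat.zero_le n), hmin n, hρ1 n]
    rw [le_div_iff₀' hc]
    calc c * |p n - q n| ^ 3 = |p n - q n| * (c * (p n - q n) ^ 2) := by rw [← sq_abs]; ring
      _ ≤ ρ 0 * min (p n) (q n) * (c * (p n - q n) ^ 2) := by gcongr
      _ = ρ 0 * (c * min (p n) (q n) * (p n - q n) ^ 2) := by ring
      _ ≤ ρ 0 * (ρ n - ρ (n + 1)) := mul_le_mul_of_nonneg_left (hgain n) (by linarith [hρ1 0])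
  refine tendsto_zero_of_tendsto_pow_zero three_ne_zero (fun n => abs_nonneg _) ?_
  refine squeeze_zero (fun n => by positivity) hcube ?_
  simpa using (hdiff.const_mul (ρ 0)).div_const c

lemma skewProduct_iterate_fst {B α : Type*} (R : B → B) (ψ : B → α → α) (p : B × α) (n : ℕ) :
    ((fun p : B × α => (R p.1, ψ p.1 p.2))^[n] p).1 = R^[n] p.1 :=
  (Function.Semiconj.iterate_right (f := Prod.fst) (fun _ => rfl) n) p

lemma skewProduct_iterate_succ_snd {B α : Type*} (R : B → B) (ψ : B → α → α) (p : B × α)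
    (n : ℕ) :
    ((fun p : B × α => (R p.1, ψ p.1 p.2))^[n + 1] p).2 =
      ψ (R^[n] p.1) ((fun p : B × α => (R p.1, ψ p.1 p.2))^[n] p).2 := by
  rw [Function.iterate_succ_apply', skewProduct_iterate_fst]

theorem preinvariant_graph_is_attractor_general {B : Type*} (a β : ℝ) (ha : 0 < a) (hβ : 0 < β)
    (R : B → B) (ψ ψ' : B → ℝ → ℝ) (b : B → ℝ)
    (hmap : ∀ θ, MapsTo (ψ θ) (Icc 0 a) (Icc 0 a))
    (hzero : ∀ θ, ψ θ 0 = 0)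
    (hconc : ∀ θ, ConcaveOn ℝ (Icc 0 a)
      (fun x => ψ θ x + β * sSup (ψ θ '' Icc 0 a) * x ^ 2))
    (hderiv : ∀ θ, ∀ x ∈ Ioc (0:ℝ) a, HasDerivWithinAt (ψ θ) (ψ' θ x) (Iio x) x)
    (hb : ∀ θ, b θ = sSup {x | x ∈ Ioc (0:ℝ) a ∧ |ψ' θ x| < ψ θ x / x})
    (hiso : ∀ θ, (∃ x ∈ Icc (0:ℝ) a, ψ (R θ) x ≠ 0) →
      ∀ x ∈ Icc (0:ℝ) a, ψ θ x < b (R θ))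
    (φ : B → ℝ) (hφmem : ∀ θ, φ θ ∈ Icc 0 a)
    (hφpre : ∀ θ, ∃ N : ℕ, ∀ n ≥ N,
      ψ (R^[n] θ) (φ (R^[n] θ)) = φ (R^[n + 1] θ))
    (hφpos : ∀ θ, ¬ {n : ℕ | ∀ x ∈ Icc (0:ℝ) a, ψ (R^[n] θ) x = 0}.Infinite →
      0 < φ θ) :
    ∀ θ, ∀ x ∈ Icc (0:ℝ) a,
      (∀ n : ℕ, ((fun p : B × ℝ => (R p.1, ψ p.1 p.2))^[n] (θ, x)).2 ≠ 0) →
      Tendsto (fun n : ℕ =>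
          |((fun p : B × ℝ => (R p.1, ψ p.1 p.2))^[n] (θ, x)).2 - φ (R^[n] θ)|)
        atTop (nhds 0) := by
  intro θ x hx hne
  obtain ⟨X, hX⟩ : ∃ X : ℕ → ℝ,
      ∀ n, ((fun p : B × ℝ => (R p.1, ψ p.1 p.2))^[n] (θ, x)).2 = X n := ⟨_, fun _ => rfl⟩
  simp only [hX] at hne ⊢
  have hXsucc (n : ℕ) : X (n + 1) = ψ (R^[n] θ) (X n) := by
    rw [← hX, ← hX, skewProduct_iterate_succ_snd]
  have hXmem (n : ℕ) : X n ∈ Icc 0 a := by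
    induction n with
    | zero => rw [← hX]; exact hx
    | succ n ih => rw [hXsucc]; exact hmap _ ih
  have hXpos (n : ℕ) : 0 < X n := (hXmem n).1.lt_of_ne (hne n).symm
  have hfiber (n : ℕ) : ∃ y ∈ Icc (0:ℝ) a, ψ (R^[n] θ) y ≠ 0 :=
    ⟨X n, hXmem n, hXsucc n ▸ hne (n + 1)⟩
  have hφpos' (n : ℕ) : 0 < φ (R^[n] θ) := hφpos _ fun hpinch => by
    obtain ⟨k, hk⟩ := hpinch.nonempty
    obtain ⟨y, hy, hψy⟩ := hfiber (k + n)
    exact hψy (Function.iterate_add_apply R k n θ ▸ hk y hy)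
  have hbelow (n : ℕ) : ∀ y ∈ Icc (0:ℝ) a,
      ψ (R^[n] θ) y < isoclinicPoint a (ψ (R^[n + 1] θ)) (ψ' (R^[n + 1] θ)) := by
    have h := hiso _ (Function.iterate_succ_apply' R n θ ▸ hfiber (n + 1))
    rwa [hb, ← Function.iterate_succ_apply' R n θ] at h
  obtain ⟨N, hN⟩ := hφpre θ
  refine (tendsto_add_atTop_iff_nat (N + 1)).1 <| tendsto_abs_sub_of_maxMinRatio_contraction
    (div_pos hβ ha) (fun _ => hXpos _) (fun _ => hφpos' _) fun n => ?_
  obtain ⟨k, hk, hkN⟩ : ∃ k, n + (N + 1) = k + 1 ∧ N ≤ k := ⟨n + N, by omega, by omega⟩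
  rw [show n + 1 + (N + 1) = k + 1 + 1 by omega, hk, hXsucc (k + 1), ← hN (k + 1) (by omega)]
  refine maxMinRatio_apply_mul_le_of_lt_isoclinicPoint (hmap _) (hzero _) (hconc _) (hderiv _)
    hβ.le ⟨hXpos _, (hXmem _).2⟩ ⟨hφpos' _, (hφmem _).2⟩ (hXsucc k ▸ hbelow k _ (hXmem k))
    (hN k hkN ▸ hbelow k _ (hφmem _)) ?_ ?_
  · rw [← hXsucc]; exact hXpos _
  · rw [hN (k + 1) (by omega)]; exact hφpos' _

/-- Theorem (preinvattr): for an isoclinic equiconcave skew product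
`F(θ,x) = (R θ, ψ_θ x)` on `B × [0,a]`, if `φ : B → [0,a]` is preinvariant and
positive at every non-pinching point, then the graph of `φ` is an attractor whose
basin contains every point whose forward trajectory avoids `B × {0}`.
Here `ψ' θ` is the left derivative of `ψ θ`, `b σ` its isoclinic point, a point `θ` is
pinching if `ψ_{Rⁿθ} ≡ 0` for infinitely many `n`, and preinvariance means the
invariance equation `ψ_{Rⁿθ}(φ(Rⁿθ)) = φ(Rⁿ⁺¹θ)` holds for all large `n`. -/
theorem preinvariant_graph_is_attractor {B : Type*} (a β : ℝ) (ha : 0 < a) (hβ : 0 < β)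
    (R : B → B) (ψ ψ' : B → ℝ → ℝ) (b : B → ℝ)
    (hmap : ∀ θ, MapsTo (ψ θ) (Icc 0 a) (Icc 0 a))
    (hzero : ∀ θ, ψ θ 0 = 0)
    (hcont : ∀ θ, ContinuousOn (ψ θ) (Icc 0 a))
    (hconc : ∀ θ, ConcaveOn ℝ (Icc 0 a)
      (fun x => ψ θ x + β * sSup (ψ θ '' Icc 0 a) * x ^ 2))
    (hderiv : ∀ θ, ∀ x ∈ Ioc (0:ℝ) a, HasDerivWithinAt (ψ θ) (ψ' θ x) (Iio x) x)
    (hb : ∀ θ, b θ = sSup {x | x ∈ Ioc (0:ℝ) a ∧ |ψ' θ x| < ψ θ x / x})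
    (hiso : ∀ θ, (∃ x ∈ Icc (0:ℝ) a, ψ (R θ) x ≠ 0) →
      ∀ x ∈ Icc (0:ℝ) a, ψ θ x < b (R θ))
    (φ : B → ℝ) (hφmem : ∀ θ, φ θ ∈ Icc 0 a)
    (hφpre : ∀ θ, ∃ N : ℕ, ∀ n ≥ N,
      ψ (R^[n] θ) (φ (R^[n] θ)) = φ (R^[n + 1] θ))
    (hφpos : ∀ θ, ¬ {n : ℕ | ∀ x ∈ Icc (0:ℝ) a, ψ (R^[n] θ) x = 0}.Infinite →
      0 < φ θ) :
    ∀ θ, ∀ x ∈ Icc (0:ℝ) a,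
      (∀ n : ℕ, ((fun p : B × ℝ => (R p.1, ψ p.1 p.2))^[n] (θ, x)).2 ≠ 0) →
      Tendsto (fun n : ℕ =>
          |((fun p : B × ℝ => (R p.1, ψ p.1 p.2))^[n] (θ, x)).2 - φ (R^[n] θ)|)
        atTop (nhds 0) :=
  preinvariant_graph_is_attractor_general a β ha hβ R ψ ψ' b hmap hzero hconc hderiv hb hiso φ hφmem
    hφpre hφpos
end

section
/- Let F(θ,x) = (R(θ), ψ_θ(x)) be a monotone equiconcave skew product on B × [0,a], with R invertible preserving an ergodic probability measure μ. Let φ_K be the pullback limit function (the pointwise limit of the pullbacks of the constant function a), whose graph is F-invariant. If φ_K > 0 μ-almost everywhere, then the graph of φ_K is an attractor whose basin of attraction contains Z × (0,a] for some Z ⊆ B with μ(Z) = 1: for every θ ∈ Z and every x ∈ (0,a], |π₂(Fⁿ(θ,x)) − φ_K(Rⁿ(θ))| → 0 as n → ∞. -/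
/-!
Along a forward orbit the fibre maps form a sequence of monotone, equiconcave maps of `[0, a]`
fixing `0`, and `n ↦ φ_K (Rⁿ θ)` is an orbit of it which stays positive for `θ` in a set of full
measure (positivity a.e. propagates along orbits of the measure-preserving `R`). Two orbits
`x_n`, `y_n` are compared through `u_n = min`, `v_n = max`, themselves orbits by monotonicity.
Concavity of `ψ + βγ x²` between `0` and `v` gives
`u/v + β u (v - u) ≤ ψ u / ψ v`, so the ratio `u_n / v_n ≤ 1` increases by at least
`β u_n (v_n - u_n) ≥ β (u_0 / v_0) (v_n - u_n)²`; its convergence forces `v_n - u_n → 0`.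
-/

open Set Filter MeasureTheory Topology

lemma div_mul_add_mul_le_of_concaveOn_add_sq {f : ℝ → ℝ} {a κ : ℝ}
    (hconc : ConcaveOn ℝ (Icc 0 a) (fun x => f x + κ * x ^ 2)) (hf0 : f 0 = 0)
    {u v : ℝ} (hu : 0 ≤ u) (huv : u ≤ v) (hv : 0 < v) (hva : v ≤ a) :
    u / v * f v + κ * (u * (v - u)) ≤ f u := by
  have hconv := hconc.2 (x := v) (y := 0) ⟨hv.le, hva⟩ ⟨le_rfl, hv.le.trans hva⟩
    (div_nonneg hu hv.le) (sub_nonneg.2 ((div_le_one hv).2 huv)) (add_sub_cancel _ _)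
  simp only [smul_eq_mul, mul_zero, add_zero, hf0, div_mul_cancel₀ u hv.ne'] at hconv
  have hκ : u / v * (κ * v ^ 2) = κ * (u * v) := by field_simp
  nlinarith [hconv, hκ]

lemma div_add_mul_le_div_of_concaveOn {f : ℝ → ℝ} {a β : ℝ} (hβ : 0 ≤ β)
    (hbdd : BddAbove (f '' Icc 0 a)) (hf0 : f 0 = 0)
    (hconc : ConcaveOn ℝ (Icc 0 a) (fun x => f x + β * sSup (f '' Icc 0 a) * x ^ 2))
    {u v : ℝ} (hu : 0 < u) (huv : u ≤ v) (hva : v ≤ a) (hfv : 0 < f v) :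
    u / v + β * (u * (v - u)) ≤ f u / f v := by
  have hv : 0 < v := hu.trans_le huv
  have hconv := div_mul_add_mul_le_of_concaveOn_add_sq hconc hf0 hu.le huv hv hva
  have hγ : f v ≤ sSup (f '' Icc 0 a) := le_csSup hbdd (mem_image_of_mem f ⟨hv.le, hva⟩)
  have hw : 0 ≤ β * (u * (v - u)) := mul_nonneg hβ (mul_nonneg hu.le (sub_nonneg.2 huv))
  rw [le_div_iff₀ hfv]
  nlinarith [mul_le_mul_of_nonneg_left hγ hw]

lemma tendsto_sub_of_div_add_mul_le_div {u v : ℕ → ℝ} {β : ℝ} (hβ : 0 < β)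
    (hu : ∀ n, 0 < u n) (huv : ∀ n, u n ≤ v n)
    (hstep : ∀ n, u n / v n + β * (u n * (v n - u n)) ≤ u (n + 1) / v (n + 1)) :
    Tendsto (fun n => v n - u n) atTop (𝓝 0) := by
  set r : ℕ → ℝ := fun n => u n / v n
  have hr_step : ∀ n, r n + β * (u n * (v n - u n)) ≤ r (n + 1) := hstep
  have hv : ∀ n, 0 < v n := fun n => (hu n).trans_le (huv n)
  have hgap : ∀ n, 0 ≤ v n - u n := fun n => sub_nonneg.2 (huv n)
  have hr_mono : Monotone r := monotone_nat_of_le_succ fun n => by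
    nlinarith [hr_step n, mul_pos hβ (hu n), hgap n]
  have hr_le : ∀ n, r n ≤ 1 := fun n => (div_le_one (hv n)).2 (huv n)
  have hr0 : 0 < r 0 := div_pos (hu 0) (hv 0)
  have hr_lim := tendsto_atTop_ciSup hr_mono ⟨1, by rintro _ ⟨n, rfl⟩; exact hr_le n⟩
  have hincr : Tendsto (fun n => (r (n + 1) - r n) / (β * r 0)) atTop (𝓝 0) := by
    simpa using ((hr_lim.comp (tendsto_add_atTop_nat 1)).sub hr_lim).div_const (β * r 0)
  have hsq : ∀ n, (v n - u n) ^ 2 ≤ (r (n + 1) - r n) / (β * r 0) := fun n => by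
    have hr : r 0 * (v n - u n) ^ 2 ≤ u n * (v n - u n) := calc
      r 0 * (v n - u n) ^ 2 ≤ r n * (v n * (v n - u n)) := by
        gcongr
        · exact (div_pos (hu n) (hv n)).le
        · exact hr_mono (Nat.zero_le n)
        · rw [sq]
          exact mul_le_mul_of_nonneg_right (by linarith [hu n]) (hgap n)
      _ = u n * (v n - u n) := by rw [← mul_assoc, div_mul_cancel₀ (u n) (hv n).ne']
    rw [le_div_iff₀ (mul_pos hβ hr0)]
    nlinarith [hr_step n, mul_le_mul_of_nonneg_left hr hβ.le]
  have hsq_lim : Tendsto (fun n => (v n - u n) ^ 2) atTop (𝓝 0) :=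
    tendsto_of_tendsto_of_tendsto_of_le_of_le tendsto_const_nhds hincr (fun n => sq_nonneg _) hsq
  simpa [Real.sqrt_sq (hgap _)] using hsq_lim.sqrt

lemma mem_of_succ_eq_of_mapsTo {α : Type*} {s : Set α} {f : ℕ → α → α} {x : ℕ → α}
    (hf : ∀ n, MapsTo (f n) s s) (hx : ∀ n, x (n + 1) = f n (x n)) (h0 : x 0 ∈ s) :
    ∀ n, x n ∈ s
  | 0 => h0
  | n + 1 => hx n ▸ hf n (mem_of_succ_eq_of_mapsTo hf hx h0 n)

lemma tendsto_abs_sub_of_equiconcave {f : ℕ → ℝ → ℝ} {a β : ℝ} (hβ : 0 < β)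
    (hmap : ∀ n, MapsTo (f n) (Icc 0 a) (Icc 0 a)) (hzero : ∀ n, f n 0 = 0)
    (hmono : ∀ n, MonotoneOn (f n) (Icc 0 a))
    (hconc : ∀ n, ConcaveOn ℝ (Icc 0 a)
      (fun x => f n x + β * sSup (f n '' Icc 0 a) * x ^ 2))
    {x y : ℕ → ℝ} (hx : ∀ n, x (n + 1) = f n (x n)) (hy : ∀ n, y (n + 1) = f n (y n))
    (hx0 : x 0 ∈ Ioc 0 a) (hy0 : y 0 ∈ Icc 0 a) (hypos : ∀ n, 0 < y n) :
    Tendsto (fun n => |x n - y n|) atTop (𝓝 0) := by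
  have hxmem := mem_of_succ_eq_of_mapsTo hmap hx (Ioc_subset_Icc_self hx0)
  have hymem := mem_of_succ_eq_of_mapsTo hmap hy hy0
  set u : ℕ → ℝ := fun n => min (x n) (y n)
  set v : ℕ → ℝ := fun n => max (x n) (y n)
  have hu : ∀ n, u (n + 1) = f n (u n) := fun n => by
    simp only [u, hx, hy, (hmono n).map_min (hxmem n) (hymem n)]
  have hv : ∀ n, v (n + 1) = f n (v n) := fun n => by
    simp only [v, hx, hy, (hmono n).map_max (hxmem n) (hymem n)]
  have hvmem : ∀ n, v n ∈ Icc 0 a := fun n => ⟨(hymem n).1.trans (le_max_right _ _),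
    max_le (hxmem n).2 (hymem n).2⟩
  have hfv : ∀ n, 0 < f n (v n) := fun n => (hypos (n + 1)).trans_le (by
    rw [← hv]; exact le_max_right _ _)
  have hstep : ∀ n, 0 < u n →
      u n / v n + β * (u n * (v n - u n)) ≤ u (n + 1) / v (n + 1) := fun n hun => by
    rw [hu, hv]
    exact div_add_mul_le_div_of_concaveOn hβ.le ⟨a, (hmap n).image_subset.trans fun _ h => h.2⟩
      (hzero n) (hconc n) hun min_le_max (hvmem n).2 (hfv n)
  have hupos : ∀ n, 0 < u n := by
    intro n
    induction n with
    | zero => exact lt_min hx0.1 (hypos 0)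
    | succ n ih =>
      have hr : 0 < u n / v n + β * (u n * (v n - u n)) :=
        add_pos_of_pos_of_nonneg (div_pos ih (ih.trans_le min_le_max))
          (mul_nonneg hβ.le (mul_nonneg ih.le (sub_nonneg.2 min_le_max)))
      have := hr.trans_le (hstep n ih)
      rwa [div_pos_iff_of_pos_right (hfv n |>.trans_eq (hv n).symm)] at this
  refine (tendsto_sub_of_div_add_mul_le_div hβ hupos (fun _ => min_le_max)
    fun n => hstep n (hupos n)).congr fun n => ?_
  exact max_sub_min_eq_abs (x n) (y n) |>.trans (abs_sub_comm _ _)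

theorem pullback_graph_is_attractor_general {B : Type*} [MeasurableSpace B]
    (a β : ℝ) (ha : 0 < a) (hβ : 0 < β)
    (μ : Measure B) [IsProbabilityMeasure μ]
    (R Rinv : B → B)
    (herg : Ergodic R μ)
    (ψ : B → ℝ → ℝ)
    (hmap : ∀ θ, MapsTo (ψ θ) (Icc 0 a) (Icc 0 a))
    (hzero : ∀ θ, ψ θ 0 = 0)
    (hmono : ∀ θ, MonotoneOn (ψ θ) (Icc 0 a))
    (hconc : ∀ θ, ConcaveOn ℝ (Icc 0 a)
      (fun x => ψ θ x + β * sSup (ψ θ '' Icc 0 a) * x ^ 2))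
    (g : ℕ → B → ℝ) (hg0 : ∀ θ, g 0 θ = a)
    (hgs : ∀ (n : ℕ) (θ : B), g (n + 1) θ = ψ (Rinv θ) (g n (Rinv θ)))
    (φK : B → ℝ)
    (hφK : ∀ θ, Tendsto (fun n => g n θ) atTop (nhds (φK θ)))
    (hinvgraph : ∀ θ, ψ θ (φK θ) = φK (R θ))
    (hpos : ∀ᵐ θ ∂μ, 0 < φK θ) :
    ∃ Z : Set B, μ Z = 1 ∧
      ∀ θ ∈ Z, ∀ x ∈ Ioc (0:ℝ) a,
        Tendsto (fun n : ℕ =>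
            |((fun p : B × ℝ => (R p.1, ψ p.1 p.2))^[n] (θ, x)).2 - φK (R^[n] θ)|)
          atTop (nhds 0) := by
  have hg_mem : ∀ n θ, g n θ ∈ Icc 0 a := by
    intro n
    induction n with
    | zero => exact fun θ => by rw [hg0]; exact ⟨ha.le, le_rfl⟩
    | succ n ih => exact fun θ => hgs n θ ▸ hmap _ (ih _)
  have hφK_mem : ∀ θ, φK θ ∈ Icc 0 a := fun θ =>
    isClosed_Icc.mem_of_tendsto (hφK θ) (Eventually.of_forall fun n => hg_mem n θ)
  have horbit_pos : ∀ᵐ θ ∂μ, ∀ n, 0 < φK (R^[n] θ) := ae_all_iff.2 fun n =>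
    (herg.toMeasurePreserving.iterate n).quasiMeasurePreserving.ae hpos
  refine ⟨{θ | ∀ n, 0 < φK (R^[n] θ)}, ?_, fun θ hθ x hx => ?_⟩
  · rw [measure_congr (eventuallyEq_univ.2 horbit_pos), measure_univ]
  set F : B × ℝ → B × ℝ := fun p => (R p.1, ψ p.1 p.2)
  have hfst : ∀ n, (F^[n] (θ, x)).1 = R^[n] θ := fun n =>
    (Function.Semiconj.iterate_right (f := Prod.fst) (fun _ => rfl) n) (θ, x)
  refine tendsto_abs_sub_of_equiconcave (f := fun n => ψ (R^[n] θ)) hβ (fun n => hmap _)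
    (fun n => hzero _) (fun n => hmono _) (fun n => hconc _) (fun n => ?_) (fun n => ?_) hx
    (hφK_mem θ) hθ
  · rw [Function.iterate_succ_apply', ← hfst n]
  · rw [Function.iterate_succ_apply', hinvgraph]

/-- Theorem (phik): for a monotone equiconcave skew product `F(θ,x) = (R θ, ψ_θ x)`
on `B × [0,a]` with `R` invertible and preserving an ergodic probability measure `μ`,
if the pullback limit function `φ_K` (the pointwise limit of the pullbacks
`gₙ(θ) = ψ_{R⁻¹θ} ∘ ⋯ ∘ ψ_{R⁻ⁿθ}(a)` of the constant `a`, whose graph is invariant)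
is positive μ-a.e., then its graph is an attractor whose basin contains `Z × (0,a]`
for some `Z ⊆ B` of full μ-measure. -/
theorem pullback_graph_is_attractor {B : Type*} [MeasurableSpace B]
    (a β : ℝ) (ha : 0 < a) (hβ : 0 < β)
    (μ : Measure B) [IsProbabilityMeasure μ]
    (R Rinv : B → B)
    (hleft : Function.LeftInverse Rinv R) (hright : Function.RightInverse Rinv R)
    (herg : Ergodic R μ)
    (ψ : B → ℝ → ℝ)
    (hmap : ∀ θ, MapsTo (ψ θ) (Icc 0 a) (Icc 0 a))
    (hzero : ∀ θ, ψ θ 0 = 0)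
    (hmono : ∀ θ, MonotoneOn (ψ θ) (Icc 0 a))
    (hcont : ∀ θ, ContinuousOn (ψ θ) (Icc 0 a))
    (hconc : ∀ θ, ConcaveOn ℝ (Icc 0 a)
      (fun x => ψ θ x + β * sSup (ψ θ '' Icc 0 a) * x ^ 2))
    (g : ℕ → B → ℝ) (hg0 : ∀ θ, g 0 θ = a)
    (hgs : ∀ (n : ℕ) (θ : B), g (n + 1) θ = ψ (Rinv θ) (g n (Rinv θ)))
    (φK : B → ℝ)
    (hφK : ∀ θ, Tendsto (fun n => g n θ) atTop (nhds (φK θ)))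
    (hinvgraph : ∀ θ, ψ θ (φK θ) = φK (R θ))
    (hpos : ∀ᵐ θ ∂μ, 0 < φK θ) :
    ∃ Z : Set B, μ Z = 1 ∧
      ∀ θ ∈ Z, ∀ x ∈ Ioc (0:ℝ) a,
        Tendsto (fun n : ℕ =>
            |((fun p : B × ℝ => (R p.1, ψ p.1 p.2))^[n] (θ, x)).2 - φK (R^[n] θ)|)
          atTop (nhds 0) :=
  pullback_graph_is_attractor_general a β ha hβ μ R Rinv herg ψ hmap hzero hmono hconc g hg0 hgs φK
    hφK hinvgraph hpos
end
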